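/- arXiv:1207.4720 — 6 statements merged into one kernel-verified Lean document; each statement's English description precedes it below -/
import Mathlib

section
/- Let m ≥ 2 and let σ, σ̄ : (a,b) → ℝ^m be two Frenet curves with Frenet apparatuses (X_i, κ_i^σ) and (X̄_i, κ_i^σ̄) respectively, and let t_0 ∈ (a,b). Then there exist ε > 0 and an orientation-preserving affine isometry φ of ℝ^m (φ(x) = Lx + c with L ∈ SO(m), c ∈ ℝ^m) such that σ̄(t) = φ(σ(t)) for all |t − t_0| < ε if and only if there exists ε > 0 such that κ_i^σ(t) = κ_i^σ̄(t) for all 0 ≤ i ≤ m−1 and all |t − t_0| < ε. (This is the congruence theorem for curves in a space of constant curvature, in the flat Euclidean case.) -/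
open scoped RealInnerProductSpace

noncomputable section

abbrev E (m : ℕ) : Type := EuclideanSpace ℝ (Fin m)

/-- A Frenet curve on `(a,b)`: smooth there, with `σ⁽¹⁾(t), …, σ⁽ᵐ⁻¹⁾(t)` linearly
independent for every `t ∈ (a,b)`. -/
def IsFrenetCurve (m : ℕ) (a b : ℝ) (σ : ℝ → E m) : Prop :=
  ContDiffOn ℝ (⊤ : ℕ∞) σ (Set.Ioo a b) ∧
    ∀ t ∈ Set.Ioo a b,
      LinearIndependent ℝ (fun i : Fin (m - 1) => iteratedDeriv ((i : ℕ) + 1) σ t)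

/-- A Frenet apparatus (Frenet frame `X₁,…,X_m` -- here `0`-indexed as `X 0, …, X (m-1)` --
and curvatures `κ₀,…,κ_{m-1}`) for a curve `σ : (a,b) → ℝᵐ`. -/
structure IsFrenetApparatus (m : ℕ) (a b : ℝ) (σ : ℝ → E m)
    (X : Fin m → ℝ → E m) (κ : Fin m → ℝ → ℝ) : Prop where
  smooth_frame : ∀ i, ContDiffOn ℝ (⊤ : ℕ∞) (X i) (Set.Ioo a b)
  smooth_curv : ∀ i, ContDiffOn ℝ (⊤ : ℕ∞) (κ i) (Set.Ioo a b)
  curv_pos : ∀ i : Fin m, (i : ℕ) < m - 1 → ∀ t ∈ Set.Ioo a b, 0 < κ i t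
  orthonormal : ∀ t ∈ Set.Ioo a b, Orthonormal ℝ (fun i => X i t)
  pos_oriented : ∀ t ∈ Set.Ioo a b,
      0 < Matrix.det (Matrix.of fun i j : Fin m => X i t j)
  span_eq : ∀ t ∈ Set.Ioo a b, ∀ i : ℕ, ∀ _hi : i < m - 1,
      Submodule.span ℝ (Set.range fun h : Fin (i + 1) => X (Fin.castLE (by omega) h) t)
        = Submodule.span ℝ (Set.range fun h : Fin (i + 1) => iteratedDeriv ((h : ℕ) + 1) σ t)
  same_orient : ∀ t ∈ Set.Ioo a b, ∀ i : ℕ, ∀ _hi : i < m - 1,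
      0 < ⟪iteratedDeriv (i + 1) σ t, X ⟨i, by omega⟩ t⟫
  frenet_tangent : ∀ t ∈ Set.Ioo a b, ∀ h0 : 0 < m,
      deriv σ t = κ ⟨0, h0⟩ t • X ⟨0, h0⟩ t
  frenet_first : ∀ t ∈ Set.Ioo a b, ∀ h1 : 1 < m,
      deriv (X ⟨0, by omega⟩) t
        = (κ ⟨0, by omega⟩ t * κ ⟨1, h1⟩ t) • X ⟨1, h1⟩ t
  frenet_mid : ∀ t ∈ Set.Ioo a b, ∀ i : ℕ, ∀ _h1 : 1 ≤ i, ∀ _h2 : i < m - 1,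
      deriv (X ⟨i, by omega⟩) t
        = κ ⟨0, by omega⟩ t •
            ((-(κ ⟨i, by omega⟩ t)) • X ⟨i - 1, by omega⟩ t
              + κ ⟨i + 1, by omega⟩ t • X ⟨i + 1, by omega⟩ t)
  frenet_last : ∀ t ∈ Set.Ioo a b, ∀ h2 : 2 ≤ m,
      deriv (X ⟨m - 1, by omega⟩) t
        = (-(κ ⟨0, by omega⟩ t * κ ⟨m - 1, by omega⟩ t)) • X ⟨m - 2, by omega⟩ t


section Helpers

theorem const_of_deriv_zero {F : Type*} [NormedAddCommGroup F] [NormedSpace ℝ F]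
    (f : ℝ → F) (c d : ℝ) (hf : ∀ x ∈ Set.Ioo c d, HasDerivAt f 0 x)
    {x y : ℝ} (hx : x ∈ Set.Ioo c d) (hy : y ∈ Set.Ioo c d) : f x = f y := by
  have hdiff : DifferentiableOn ℝ f (Set.Ioo c d) := fun z hz =>
    (hf z hz).differentiableAt.differentiableWithinAt
  refine (convex_Ioo c d).is_const_of_fderivWithin_eq_zero hdiff (fun z hz => ?_) hx hy
  rw [fderivWithin_of_isOpen isOpen_Ioo hz, (hf z hz).hasFDerivAt.fderiv]
  ext w
  simp

theorem matdet (m : ℕ) (L : E m ≃ₗᵢ[ℝ] E m) (v : Fin m → E m) :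
    Matrix.det (Matrix.of fun i j => L (v i) j)
      = LinearMap.det (L.toLinearEquiv : E m →ₗ[ℝ] E m)
        * Matrix.det (Matrix.of fun i j => v i j) := by
  classical
  set std := (EuclideanSpace.basisFun (Fin m) ℝ).toBasis with hstd
  set A := LinearMap.toMatrix std std (L.toLinearEquiv : E m →ₗ[ℝ] E m) with hA
  have hrepr : ∀ w : E m, ∀ j, std.repr w j = w j := by
    intro w j; simp [hstd]
  have key : ∀ w : E m, ∀ j, L w j = ∑ k, A j k * w k := by
    intro w j
    have := LinearMap.toMatrix_mulVec_repr std std (L.toLinearEquiv : E m →ₗ[ℝ] E m) w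
    have h2 := congrFun this j
    simp only [Matrix.mulVec, dotProduct] at h2
    simp only [hrepr] at h2
    exact h2.symm
  have hM : (Matrix.of fun i j => L (v i) j)
      = (Matrix.of fun i j => v i j) * A.transpose := by
    ext i j
    simp only [Matrix.mul_apply, Matrix.of_apply, Matrix.transpose_apply]
    rw [key (v i) j]
    exact Finset.sum_congr rfl fun k _ => by ring
  rw [hM, Matrix.det_mul, Matrix.det_transpose, ← LinearMap.det_toMatrix std]
  exact mul_comm _ _

theorem iter_smooth {m : ℕ} (f : ℝ → E m) (s : Set ℝ) (hs : IsOpen s)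
    (hf : ContDiffOn ℝ (⊤ : ℕ∞) f s) (n : ℕ) : ContDiffOn ℝ (⊤ : ℕ∞) (iteratedDeriv n f) s := by
  induction n with
  | zero => simpa using hf
  | succ k ih => rw [iteratedDeriv_succ]; exact ih.deriv_of_isOpen hs le_rfl

theorem unit_inner_one_eq {m : ℕ} (u v : E m) (hu : ‖u‖ = 1) (hv : ‖v‖ = 1)
    (huv : ⟪u, v⟫ = 1) : u = v := by
  have h : ‖u - v‖ ^ 2 = 0 := by rw [norm_sub_sq_real, hu, hv, huv]; ring
  have := pow_eq_zero_iff (n := 2) (by norm_num) |>.mp h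
  rwa [norm_eq_zero, sub_eq_zero] at this

theorem sum_pick {M : Type*} [AddCommMonoid M] {m n : ℕ} (hn : n < m) (g : Fin m → M) :
    (∑ j : Fin m, if (j : ℕ) = n then g j else 0) = g ⟨n, hn⟩ := by
  rw [Finset.sum_eq_single ⟨n, hn⟩]
  · simp
  · intro j _ hj
    rw [if_neg]
    intro h; exact hj (Fin.ext h)
  · simp

theorem sum_pick_zero {M : Type*} [AddCommMonoid M] {m n : ℕ} (hn : ¬ n < m) (g : Fin m → M) :
    (∑ j : Fin m, if (j : ℕ) = n then g j else 0) = 0 := by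
  apply Finset.sum_eq_zero
  intro j _
  rw [if_neg]
  have := j.isLt; omega

theorem sum_antisym {m : ℕ} (A S : Fin m → Fin m → ℝ)
    (hA : ∀ i j, A j i = -A i j) (hS : ∀ i j, S j i = S i j) :
    ∑ i, ∑ j, A i j * S i j = 0 := by
  have h : (∑ i, ∑ j, A i j * S i j) = - ∑ i, ∑ j, A i j * S i j := by
    conv_lhs => rw [Finset.sum_comm]
    rw [← Finset.sum_neg_distrib]
    refine Finset.sum_congr rfl fun i _ => ?_
    rw [← Finset.sum_neg_distrib]
    refine Finset.sum_congr rfl fun j _ => ?_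
    rw [hA j i, hS j i]; ring
  linarith

/-- The antisymmetric coefficient matrix of the Frenet equations. -/
def frA {m : ℕ} (h0 : 0 < m) (κ : Fin m → ℝ → ℝ) (t : ℝ) (i j : Fin m) : ℝ :=
  κ ⟨0, h0⟩ t *
    ((if (j : ℕ) = (i : ℕ) + 1 then κ j t else 0) -
      (if (i : ℕ) = (j : ℕ) + 1 then κ i t else 0))

theorem frA_antisymm {m : ℕ} (h0 : 0 < m) (κ : Fin m → ℝ → ℝ) (t : ℝ) (i j : Fin m) :
    frA h0 κ t j i = - frA h0 κ t i j := by
  unfold frA; ring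

theorem frA_congr {m : ℕ} (h0 : 0 < m) (κ κ' : Fin m → ℝ → ℝ) (t : ℝ)
    (h : ∀ i, κ i t = κ' i t) (i j : Fin m) : frA h0 κ t i j = frA h0 κ' t i j := by
  unfold frA
  rw [h ⟨0, h0⟩, h i, h j]

theorem hasDerivAt_isometry {m : ℕ} (L : E m ≃ₗᵢ[ℝ] E m) {f : ℝ → E m} {f' : E m} {t : ℝ}
    (hf : HasDerivAt f f' t) : HasDerivAt (fun s => L (f s)) (L f') t := by
  have := L.toLinearIsometry.toContinuousLinearMap.hasFDerivAt.comp_hasDerivAt t hf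
  exact this

def onb {m : ℕ} (h0 : 0 < m) (v : Fin m → E m) (hv : Orthonormal ℝ v) :
    OrthonormalBasis (Fin m) ℝ (E m) :=
  haveI : Nonempty (Fin m) := ⟨⟨0, h0⟩⟩
  OrthonormalBasis.mk hv (by
    rw [LinearIndependent.span_eq_top_of_card_eq_finrank hv.linearIndependent (by simp)])

theorem onb_apply {m : ℕ} (h0 : 0 < m) (v : Fin m → E m) (hv : Orthonormal ℝ v) (i : Fin m) :
    onb h0 v hv i = v i := by simp [onb]

end Helpers

theorem frenet_deriv_eq {m : ℕ} {a b : ℝ} {σ : ℝ → E m} {X : Fin m → ℝ → E m}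
    {κ : Fin m → ℝ → ℝ} (hm : 2 ≤ m) (hX : IsFrenetApparatus m a b σ X κ)
    {t : ℝ} (ht : t ∈ Set.Ioo a b) (i : Fin m) :
    deriv (X i) t = ∑ j, frA (by omega) κ t i j • X j t := by
  have h0 : 0 < m := by omega
  have key : ∀ (c k1 k2 : ℝ) (u v : E m),
      c • ((-k1) • u + k2 • v) = (c * k2) • v - (c * k1) • u := by
    intros; module
  obtain ⟨iv, hiv⟩ := i
  have hsplit : (∑ j, frA h0 κ t ⟨iv, hiv⟩ j • X j t)
      = (∑ j : Fin m, if (j : ℕ) = iv + 1 then (κ ⟨0, h0⟩ t * κ j t) • X j t else 0)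
        - (∑ j : Fin m, if iv = (j : ℕ) + 1 then (κ ⟨0, h0⟩ t * κ ⟨iv, hiv⟩ t) • X j t else 0) := by
    rw [← Finset.sum_sub_distrib]
    refine Finset.sum_congr rfl fun j _ => ?_
    unfold frA
    rw [mul_sub, sub_smul, mul_ite, mul_zero, ite_smul, zero_smul,
      mul_ite, mul_zero, ite_smul, zero_smul]
  rw [hsplit]
  rcases Nat.eq_zero_or_pos iv with h0v | h1v
  · subst h0v
    have hsecond : (∑ j : Fin m, if 0 = (j : ℕ) + 1
        then (κ ⟨0, h0⟩ t * κ ⟨0, hiv⟩ t) • X j t else 0) = 0 :=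
      Finset.sum_eq_zero fun j _ => if_neg (by omega)
    have hfirst : (∑ j : Fin m, if (j : ℕ) = 0 + 1
        then (κ ⟨0, h0⟩ t * κ j t) • X j t else 0)
        = (κ ⟨0, h0⟩ t * κ ⟨1, by omega⟩ t) • X ⟨1, by omega⟩ t :=
      sum_pick (by omega) _
    rw [hsecond, hfirst, sub_zero]
    exact hX.frenet_first t ht hm
  · rcases Nat.lt_or_ge iv (m - 1) with hmid | hlast
    · have hfirst : (∑ j : Fin m, if (j : ℕ) = iv + 1
          then (κ ⟨0, h0⟩ t * κ j t) • X j t else 0)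
          = (κ ⟨0, h0⟩ t * κ ⟨iv + 1, by omega⟩ t) • X ⟨iv + 1, by omega⟩ t :=
        sum_pick (by omega) _
      have hsecond : (∑ j : Fin m, if iv = (j : ℕ) + 1
          then (κ ⟨0, h0⟩ t * κ ⟨iv, hiv⟩ t) • X j t else 0)
          = (κ ⟨0, h0⟩ t * κ ⟨iv, hiv⟩ t) • X ⟨iv - 1, by omega⟩ t := by
        rw [← sum_pick (m := m) (n := iv - 1) (by omega)
          (fun j => (κ ⟨0, h0⟩ t * κ ⟨iv, hiv⟩ t) • X j t)]
        refine Finset.sum_congr rfl fun j _ => if_congr (by omega) rfl rfl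
      rw [hfirst, hsecond, hX.frenet_mid t ht iv h1v hmid, key]
    · have hivm : iv = m - 1 := by omega
      subst hivm
      have hfirst : (∑ j : Fin m, if (j : ℕ) = (m - 1) + 1
          then (κ ⟨0, h0⟩ t * κ j t) • X j t else 0) = 0 :=
        sum_pick_zero (by omega) _
      have hsecond : (∑ j : Fin m, if m - 1 = (j : ℕ) + 1
          then (κ ⟨0, h0⟩ t * κ ⟨m - 1, hiv⟩ t) • X j t else 0)
          = (κ ⟨0, h0⟩ t * κ ⟨m - 1, hiv⟩ t) • X ⟨m - 1 - 1, by omega⟩ t := by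
        rw [← sum_pick (m := m) (n := m - 1 - 1) (by omega)
          (fun j => (κ ⟨0, h0⟩ t * κ ⟨m - 1, hiv⟩ t) • X j t)]
        refine Finset.sum_congr rfl fun j _ => if_congr (by omega) rfl rfl
      rw [hfirst, hsecond, zero_sub, hX.frenet_last t ht hm]
      rw [neg_smul]
      have : (⟨m - 2, by omega⟩ : Fin m) = ⟨m - 1 - 1, by omega⟩ := Fin.mk_eq_mk.mpr (by omega)
      rw [this]

section Backward

variable {m : ℕ} {a b t₀ ε : ℝ} {σ σ' : ℝ → E m} {X X' : Fin m → ℝ → E m}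
  {κ κ' : Fin m → ℝ → ℝ}

theorem backward_dir (hm : 2 ≤ m) (hε : 0 < ε)
    (hsub : Set.Ioo (t₀ - ε) (t₀ + ε) ⊆ Set.Ioo a b)
    (hσ : IsFrenetCurve m a b σ) (hσ' : IsFrenetCurve m a b σ')
    (hXσ : IsFrenetApparatus m a b σ X κ)
    (hXσ' : IsFrenetApparatus m a b σ' X' κ')
    (hκeq : ∀ t ∈ Set.Ioo (t₀ - ε) (t₀ + ε), ∀ i, κ i t = κ' i t) :
    ∃ (L : E m ≃ₗᵢ[ℝ] E m) (c : E m),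
      0 < LinearMap.det (L.toLinearEquiv : E m →ₗ[ℝ] E m) ∧
      ∀ t ∈ Set.Ioo (t₀ - ε) (t₀ + ε), σ' t = L (σ t) + c := by
  have h0 : 0 < m := by omega
  set J := Set.Ioo (t₀ - ε) (t₀ + ε) with hJ
  have ht₀J : t₀ ∈ J := by constructor <;> simp [hJ] <;> linarith
  have ht₀ab : t₀ ∈ Set.Ioo a b := hsub ht₀J
  -- differentiability facts
  have hdX : ∀ (Z : Fin m → ℝ → E m) (W : Fin m → ℝ → ℝ) (τ : ℝ → E m),
      IsFrenetApparatus m a b τ Z W → ∀ i, ∀ t ∈ Set.Ioo a b,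
      HasDerivAt (Z i) (deriv (Z i) t) t := by
    intro Z W τ hZ i t ht
    exact (((hZ.smooth_frame i).contDiffAt
      (isOpen_Ioo.mem_nhds ht)).differentiableAt (by simp)).hasDerivAt
  have hdσfun : ∀ (τ : ℝ → E m), IsFrenetCurve m a b τ → ∀ t ∈ Set.Ioo a b,
      HasDerivAt τ (deriv τ t) t := by
    intro τ hτ t ht
    exact ((hτ.1.contDiffAt (isOpen_Ioo.mem_nhds ht)).differentiableAt (by simp)).hasDerivAt
  -- the isometry
  set B := onb h0 (fun i => X i t₀) (hXσ.orthonormal t₀ ht₀ab) with hB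
  set B' := onb h0 (fun i => X' i t₀) (hXσ'.orthonormal t₀ ht₀ab) with hB'
  set L : E m ≃ₗᵢ[ℝ] E m := B.repr.trans B'.repr.symm with hLdef
  have hL0 : ∀ i, L (X i t₀) = X' i t₀ := by
    intro i
    have h1 := onb_apply h0 (fun i => X i t₀) (hXσ.orthonormal t₀ ht₀ab) i
    have h2 := onb_apply h0 (fun i => X' i t₀) (hXσ'.orthonormal t₀ ht₀ab) i
    rw [hLdef, ← h2, ← h1, ← hB, ← hB']
    simp
  -- determinant positivity
  have hdetL : 0 < LinearMap.det (L.toLinearEquiv : E m →ₗ[ℝ] E m) := by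
    have hmat := matdet m L (fun i => X i t₀)
    have hXdet := hXσ.pos_oriented t₀ ht₀ab
    have hX'det := hXσ'.pos_oriented t₀ ht₀ab
    have : (Matrix.of fun i j => L (X i t₀) j) = (Matrix.of fun i j => X' i t₀ j) := by
      ext i j; simp only [Matrix.of_apply, hL0]
    rw [this] at hmat
    nlinarith [hXdet, hX'det, hmat]
  -- the comparison function
  set f : ℝ → ℝ := fun t => ∑ i, ⟪L (X i t), X' i t⟫ with hf
  have hf' : ∀ t ∈ J, HasDerivAt f 0 t := by
    intro t ht
    have htab := hsub ht
    have hD : HasDerivAt f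
        (∑ i, (⟪L (X i t), deriv (X' i) t⟫ + ⟪L (deriv (X i) t), X' i t⟫)) t := by
      apply HasDerivAt.fun_sum
      intro i _
      exact (hasDerivAt_isometry L (hdX X κ σ hXσ i t htab)).inner ℝ (hdX X' κ' σ' hXσ' i t htab)
    have hzero : (∑ i, (⟪L (X i t), deriv (X' i) t⟫ + ⟪L (deriv (X i) t), X' i t⟫)) = 0 := by
      have hAA : ∀ i, deriv (X i) t = ∑ j, frA h0 κ t i j • X j t :=
        fun i => frenet_deriv_eq hm hXσ htab i
      have hAA' : ∀ i, deriv (X' i) t = ∑ j, frA h0 κ t i j • X' j t := by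
        intro i
        rw [frenet_deriv_eq hm hXσ' htab i]
        exact Finset.sum_congr rfl fun j _ => by
          rw [frA_congr h0 κ' κ t (fun k => (hκeq t ht k).symm)]
      have step : ∀ i, (⟪L (X i t), deriv (X' i) t⟫ + ⟪L (deriv (X i) t), X' i t⟫)
          = ∑ j, frA h0 κ t i j *
              (⟪L (X i t), X' j t⟫ + ⟪L (X j t), X' i t⟫) := by
        intro i
        rw [hAA i, hAA' i, inner_sum, map_sum]
        rw [sum_inner, ← Finset.sum_add_distrib]
        refine Finset.sum_congr rfl fun j _ => ?_
        rw [real_inner_smul_right, map_smul, real_inner_smul_left]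
        ring
      calc (∑ i, (⟪L (X i t), deriv (X' i) t⟫ + ⟪L (deriv (X i) t), X' i t⟫))
          = ∑ i, ∑ j, frA h0 κ t i j *
              (⟪L (X i t), X' j t⟫ + ⟪L (X j t), X' i t⟫) :=
            Finset.sum_congr rfl fun i _ => step i
        _ = 0 := by
            apply sum_antisym
            · exact frA_antisymm h0 κ t
            · exact fun i j => add_comm _ _
    rw [← hzero]
    exact hD
  have hconst : ∀ t ∈ J, f t = f t₀ := fun t ht => const_of_deriv_zero f _ _ hf' ht ht₀J
  have hft₀ : f t₀ = m := by
    have h1 : ∀ i : Fin m, ⟪L (X i t₀), X' i t₀⟫ = 1 := by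
      intro i
      rw [hL0 i, real_inner_self_eq_norm_mul_norm, (hXσ'.orthonormal t₀ ht₀ab).1 i]
      ring
    show (∑ i : Fin m, ⟪L (X i t₀), X' i t₀⟫) = (m : ℝ)
    rw [Finset.sum_congr rfl fun i _ => h1 i]
    simp
  have hframe : ∀ t ∈ J, ∀ i, X' i t = L (X i t) := by
    intro t ht i
    have htab := hsub ht
    have hnorm1 : ∀ j, ‖L (X j t)‖ = 1 := fun j => by
      rw [L.norm_map]; exact (hXσ.orthonormal t htab).1 j
    have hnorm2 : ∀ j, ‖X' j t‖ = 1 := (hXσ'.orthonormal t htab).1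
    have hbound : ∀ j : Fin m, ⟪L (X j t), X' j t⟫ ≤ 1 := by
      intro j
      have h := real_inner_le_norm (L (X j t)) (X' j t)
      rw [hnorm1 j, hnorm2 j] at h
      simpa using h
    have hsumval : ∑ j, ⟪L (X j t), X' j t⟫ = (m : ℝ) := by
      exact (hconst t ht).trans hft₀
    have hsumeq : ∑ j : Fin m, (1 - ⟪L (X j t), X' j t⟫) = 0 := by
      rw [Finset.sum_sub_distrib, hsumval]
      simp
    have hterm := (Finset.sum_eq_zero_iff_of_nonneg
      (fun j _ => by linarith [hbound j])).mp hsumeq i (Finset.mem_univ i)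
    have hinner1 : ⟪L (X i t), X' i t⟫ = 1 := by linarith
    exact (unit_inner_one_eq _ _ (hnorm1 i) (hnorm2 i) hinner1).symm
  refine ⟨L, σ' t₀ - L (σ t₀), hdetL, ?_⟩
  intro t ht
  have hg : ∀ s ∈ J, HasDerivAt (fun u => σ' u - L (σ u)) 0 s := by
    intro s hs
    have hsab := hsub hs
    have h1 : HasDerivAt σ' (deriv σ' s) s := hdσfun σ' hσ' s hsab
    have h2 : HasDerivAt (fun u => L (σ u)) (L (deriv σ s)) s :=
      hasDerivAt_isometry L (hdσfun σ hσ s hsab)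
    have h3 := h1.sub h2
    have hzero2 : deriv σ' s - L (deriv σ s) = 0 := by
      rw [hXσ'.frenet_tangent s hsab h0, hXσ.frenet_tangent s hsab h0, map_smul,
        hframe s hs ⟨0, h0⟩, hκeq s hs ⟨0, h0⟩, sub_self]
    rwa [hzero2] at h3
  have hgc := const_of_deriv_zero (fun u => σ' u - L (σ u)) _ _ hg ht ht₀J
  have : σ' t - L (σ t) = σ' t₀ - L (σ t₀) := hgc
  rw [eq_sub_iff_add_eq] at this
  rw [← this]
  abel

end Backward

section Forward

theorem iter_transport {m : ℕ} (L : E m ≃ₗᵢ[ℝ] E m) (c : E m) {σ σ' : ℝ → E m}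
    {s sa : Set ℝ} (hs : IsOpen s) (hsa : IsOpen sa) (hsub : s ⊆ sa)
    (hσ : ContDiffOn ℝ (⊤ : ℕ∞) σ sa) (hcong : ∀ t ∈ s, σ' t = L (σ t) + c) (n : ℕ) :
    ∀ t ∈ s, iteratedDeriv (n + 1) σ' t = L (iteratedDeriv (n + 1) σ t) := by
  have hdiff : ∀ k : ℕ, ∀ t ∈ sa, HasDerivAt (iteratedDeriv k σ)
      (iteratedDeriv (k + 1) σ t) t := by
    intro k t ht
    have h1 := ((iter_smooth σ sa hsa hσ k).contDiffAt
      (hsa.mem_nhds ht)).differentiableAt (by simp)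
    have := h1.hasDerivAt
    rwa [iteratedDeriv_succ]
  induction n with
  | zero =>
    intro t ht
    have hev : σ' =ᶠ[nhds t] fun u => L (σ u) + c :=
      Filter.eventuallyEq_of_mem (hs.mem_nhds ht) hcong
    have hd : HasDerivAt (fun u => L (σ u) + c) (L (iteratedDeriv 1 σ t)) t := by
      have h00 := hdiff 0 t (hsub ht)
      rw [iteratedDeriv_zero] at h00
      exact (hasDerivAt_isometry L h00).add_const c
    rw [show (0 + 1 : ℕ) = 1 from rfl, iteratedDeriv_one, hev.deriv_eq]
    exact hd.deriv
  | succ k ih =>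
    intro t ht
    have hev : iteratedDeriv (k + 1) σ' =ᶠ[nhds t]
        fun u => L (iteratedDeriv (k + 1) σ u) :=
      Filter.eventuallyEq_of_mem (hs.mem_nhds ht) ih
    have hd : HasDerivAt (fun u => L (iteratedDeriv (k + 1) σ u))
        (L (iteratedDeriv (k + 2) σ t)) t :=
      hasDerivAt_isometry L (hdiff (k + 1) t (hsub ht))
    rw [iteratedDeriv_succ, hev.deriv_eq]
    exact hd.deriv

end Forward

theorem inner_zero_of_mem_span {m : ℕ} {u : E m} {S : Set (E m)}
    (h : ∀ v ∈ S, ⟪v, u⟫ = 0) {w : E m} (hw : w ∈ Submodule.span ℝ S) :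
    ⟪w, u⟫ = 0 := by
  induction hw using Submodule.span_induction with
  | mem v hv => exact h v hv
  | zero => simp
  | add x y hx hy ihx ihy => rw [inner_add_left, ihx, ihy]; ring
  | smul r x hx ihx => rw [real_inner_smul_left, ihx]; ring

theorem frame_transport {m : ℕ} {a b t₀ ε : ℝ} {σ σ' : ℝ → E m}
    {X X' : Fin m → ℝ → E m} {κ κ' : Fin m → ℝ → ℝ}
    (hm : 2 ≤ m) (hsub : Set.Ioo (t₀ - ε) (t₀ + ε) ⊆ Set.Ioo a b)
    (hσ : IsFrenetCurve m a b σ)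
    (hXσ : IsFrenetApparatus m a b σ X κ) (hXσ' : IsFrenetApparatus m a b σ' X' κ')
    (L : E m ≃ₗᵢ[ℝ] E m) (c : E m)
    (hdet : 0 < LinearMap.det (L.toLinearEquiv : E m →ₗ[ℝ] E m))
    (hcong : ∀ t ∈ Set.Ioo (t₀ - ε) (t₀ + ε), σ' t = L (σ t) + c) :
    ∀ t ∈ Set.Ioo (t₀ - ε) (t₀ + ε), ∀ i, X' i t = L (X i t) := by
  have h0 : 0 < m := by omega
  intro t ht
  have htab := hsub ht
  have hiter := iter_transport L c isOpen_Ioo isOpen_Ioo hsub hσ.1 hcong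
  set Yv : Fin m → E m := fun j => L (X j t) with hYv
  have hXorth := hXσ.orthonormal t htab
  have hX'orth := hXσ'.orthonormal t htab
  have hYorth : Orthonormal ℝ Yv := by
    constructor
    · intro j; rw [hYv]; simp only [L.norm_map]; exact hXorth.1 j
    · intro j k hjk; rw [hYv]; simp only [L.inner_map_map]; exact hXorth.2 hjk
  -- span equality
  have hspan : ∀ k : ℕ, ∀ hk : k < m - 1,
      Submodule.span ℝ (Set.range fun h : Fin (k + 1) => X' (Fin.castLE (by omega) h) t)
        = Submodule.span ℝ (Set.range fun h : Fin (k + 1) => Yv (Fin.castLE (by omega) h)) := by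
    intro k hk
    have e' := hXσ'.span_eq t htab k hk
    have e := hXσ.span_eq t htab k hk
    have hmapspan : ∀ v : Fin (k + 1) → E m,
        Submodule.span ℝ (Set.range fun h => L (v h))
          = Submodule.map (L.toLinearEquiv : E m →ₗ[ℝ] E m)
              (Submodule.span ℝ (Set.range v)) := by
      intro v
      rw [Submodule.map_span]
      congr 1
      rw [← Set.range_comp]
      rfl
    calc Submodule.span ℝ (Set.range fun h : Fin (k + 1) => X' (Fin.castLE (by omega) h) t)
        = Submodule.span ℝ
            (Set.range fun h : Fin (k + 1) => iteratedDeriv ((h : ℕ) + 1) σ' t) := e'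
      _ = Submodule.span ℝ
            (Set.range fun h : Fin (k + 1) => L (iteratedDeriv ((h : ℕ) + 1) σ t)) := by
          rw [show (fun h : Fin (k + 1) => iteratedDeriv ((h : ℕ) + 1) σ' t)
            = (fun h : Fin (k + 1) => L (iteratedDeriv ((h : ℕ) + 1) σ t)) from
            funext fun h => hiter (h : ℕ) t ht]
      _ = Submodule.map (L.toLinearEquiv : E m →ₗ[ℝ] E m) (Submodule.span ℝ
            (Set.range fun h : Fin (k + 1) => iteratedDeriv ((h : ℕ) + 1) σ t)) :=
          hmapspan _
      _ = Submodule.map (L.toLinearEquiv : E m →ₗ[ℝ] E m) (Submodule.span ℝ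
            (Set.range fun h : Fin (k + 1) => X (Fin.castLE (by omega) h) t)) := by
          rw [e]
      _ = Submodule.span ℝ (Set.range fun h : Fin (k + 1) => Yv (Fin.castLE (by omega) h)) :=
          (hmapspan _).symm
  -- claim 1 : for indices below m - 1
  have claim1 : ∀ p : Fin m, (p : ℕ) < m - 1 → X' p t = Yv p := by
    rintro ⟨pv, hpm⟩ hplt
    have hplt' : pv < m - 1 := hplt
    have hmem : X' ⟨pv, hpm⟩ t ∈ Submodule.span ℝ
        (Set.range fun h : Fin (pv + 1) => Yv (Fin.castLE (by omega) h)) := by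
      rw [← hspan pv hplt]
      exact Submodule.subset_span ⟨⟨pv, Nat.lt_succ_self pv⟩, rfl⟩
    obtain ⟨co, hco⟩ := (Submodule.mem_span_range_iff_exists_fun ℝ).mp hmem
    have hYor' : Orthonormal ℝ (fun h : Fin (pv + 1) => Yv (Fin.castLE (by omega) h)) :=
      hYorth.comp _ (Fin.castLE_injective _)
    have hcoeff : ∀ h : Fin (pv + 1), co h = ⟪Yv (Fin.castLE (by omega) h), X' ⟨pv, hpm⟩ t⟫ := by
      intro h
      rw [← hco]
      exact (hYor'.inner_right_fintype co h).symm
    have hzero : ∀ h : Fin (pv + 1), (h : ℕ) < pv → co h = 0 := by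
      intro h hh
      rcases Nat.eq_zero_or_pos pv with h0p | h1p
      · omega
      · have hYmem : Yv (Fin.castLE (m := m) (by omega) h) ∈ Submodule.span ℝ
            (Set.range fun g : Fin (pv - 1 + 1) => Yv (Fin.castLE (by omega) g)) :=
          Submodule.subset_span ⟨⟨(h : ℕ), by omega⟩, by
            show Yv _ = Yv _
            exact congrArg Yv (Fin.ext rfl)⟩
        rw [← hspan (pv - 1) (by omega)] at hYmem
        rw [hcoeff h]
        refine inner_zero_of_mem_span ?_ hYmem
        rintro v ⟨g, rfl⟩
        refine hX'orth.2 ?_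
        intro hcontra
        have h2 : (g : ℕ) = pv := by
          have := congrArg Fin.val hcontra
          simpa using this
        have hgv := g.isLt
        omega
    set r : ℝ := co ⟨pv, Nat.lt_succ_self pv⟩ with hr
    have hXr : X' ⟨pv, hpm⟩ t = r • Yv ⟨pv, hpm⟩ := by
      rw [← hco, Finset.sum_eq_single ⟨pv, Nat.lt_succ_self pv⟩]
      · rfl
      · intro h _ hne
        rw [hzero h (by
          have := h.isLt
          rcases Nat.lt_or_ge (h : ℕ) pv with h1 | h2
          · exact h1
          · exact absurd (Fin.ext (show (h : ℕ) = pv by omega)) hne), zero_smul]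
      · simp
    have hnorm : |r| = 1 := by
      have h1 : ‖X' ⟨pv, hpm⟩ t‖ = 1 := hX'orth.1 _
      rw [hXr, norm_smul, hYorth.1 ⟨pv, hpm⟩] at h1
      simpa using h1
    have hsign : 0 < r := by
      have hso' := hXσ'.same_orient t htab pv hplt
      have hso := hXσ.same_orient t htab pv hplt
      rw [hiter pv t ht] at hso'
      rw [hXr] at hso'
      rw [real_inner_smul_right] at hso'
      have : ⟪L (iteratedDeriv (pv + 1) σ t), Yv ⟨pv, hpm⟩⟫
          = ⟪iteratedDeriv (pv + 1) σ t, X ⟨pv, hpm⟩ t⟫ := L.inner_map_map _ _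
      rw [this] at hso'
      nlinarith [hso, hso']
    have hr1 : r = 1 := by
      rcases abs_cases r with ⟨h1, _⟩ | ⟨h1, h2⟩
      · linarith
      · linarith
    rw [hXr, hr1, one_smul]
  -- claim 2 : last index
  intro i
  rcases Nat.lt_or_ge (i : ℕ) (m - 1) with hlt | hge
  · exact claim1 i hlt
  · obtain ⟨iv, hiv⟩ := i
    have hge' : m - 1 ≤ iv := hge
    have hivm : iv = m - 1 := by omega
    subst hivm
    set BY := onb h0 Yv hYorth with hBY
    have hrepr : X' ⟨m - 1, hiv⟩ t = ∑ j, ⟪Yv j, X' ⟨m - 1, hiv⟩ t⟫ • Yv j :=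
      calc X' ⟨m - 1, hiv⟩ t
          = ∑ j, BY.repr (X' ⟨m - 1, hiv⟩ t) j • BY j := (BY.sum_repr _).symm
        _ = ∑ j, ⟪Yv j, X' ⟨m - 1, hiv⟩ t⟫ • Yv j := Finset.sum_congr rfl fun j _ => by
            rw [BY.repr_apply_apply, hBY, onb_apply]
    have hzero : ∀ j : Fin m, (j : ℕ) < m - 1 → ⟪Yv j, X' ⟨m - 1, hiv⟩ t⟫ = 0 := by
      intro j hj
      have hYmem : Yv j ∈ Submodule.span ℝ
          (Set.range fun g : Fin (m - 2 + 1) => Yv (Fin.castLE (by omega) g)) :=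
        Submodule.subset_span ⟨⟨(j : ℕ), by omega⟩, by
          show Yv _ = Yv _
          exact congrArg Yv (Fin.ext rfl)⟩
      rw [← hspan (m - 2) (by omega)] at hYmem
      refine inner_zero_of_mem_span ?_ hYmem
      rintro v ⟨g, rfl⟩
      refine hX'orth.2 ?_
      have hgv := g.isLt
      intro hcontra
      have h2 : (g : ℕ) = m - 1 := by
        have := congrArg Fin.val hcontra
        simpa using this
      omega
    set r : ℝ := ⟪Yv ⟨m - 1, hiv⟩, X' ⟨m - 1, hiv⟩ t⟫ with hr
    have hXr : X' ⟨m - 1, hiv⟩ t = r • Yv ⟨m - 1, hiv⟩ := by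
      have hs := Finset.sum_eq_single (s := Finset.univ)
        (f := fun j => ⟪Yv j, X' ⟨m - 1, hiv⟩ t⟫ • Yv j) ⟨m - 1, hiv⟩
        (fun j _ hne => by
          show ⟪Yv j, X' ⟨m - 1, hiv⟩ t⟫ • Yv j = (0 : E m)
          rw [hzero j (by
            have := j.isLt
            rcases Nat.lt_or_ge (j : ℕ) (m - 1) with h1 | h2
            · exact h1
            · exact absurd (Fin.ext (show (j : ℕ) = m - 1 by omega)) hne), zero_smul])
        (fun hcon => absurd (Finset.mem_univ _) hcon)
      rw [hrepr, hs]
    have hnorm : |r| = 1 := by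
      have h1 : ‖X' ⟨m - 1, hiv⟩ t‖ = 1 := hX'orth.1 _
      rw [hXr, norm_smul, hYorth.1 ⟨m - 1, hiv⟩] at h1
      simpa using h1
    -- determinant sign
    have hdetY : 0 < Matrix.det (Matrix.of fun p q => Yv p q) := by
      have := matdet m L (fun p => X p t)
      have hXdet := hXσ.pos_oriented t htab
      rw [hYv]
      rw [show (Matrix.of fun p q : Fin m => L (X p t) q)
        = Matrix.of fun p q : Fin m => (fun j => L (X j t)) p q from rfl] at this ⊢
      rw [this]
      positivity
    have hdetX' := hXσ'.pos_oriented t htab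
    have hMeq : (Matrix.of fun p q : Fin m => X' p t q)
        = Matrix.updateRow (Matrix.of fun p q => Yv p q) ⟨m - 1, hiv⟩
            (r • fun q => Yv ⟨m - 1, hiv⟩ q) := by
      ext p q
      by_cases hp : p = ⟨m - 1, hiv⟩
      · subst hp
        rw [Matrix.updateRow_self]
        show X' ⟨m - 1, hiv⟩ t q = _
        rw [hXr]
        rfl
      · rw [Matrix.updateRow_ne hp]
        have hplt : (p : ℕ) < m - 1 := by
          have := p.isLt
          rcases Nat.lt_or_ge (p : ℕ) (m - 1) with h1 | h2
          · exact h1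
          · exact absurd (Fin.ext (show (p : ℕ) = m - 1 by omega)) hp
        rw [Matrix.of_apply, claim1 p hplt]
        rfl
    have hdetrel : Matrix.det (Matrix.of fun p q : Fin m => X' p t q)
        = r * Matrix.det (Matrix.of fun p q => Yv p q) := by
      rw [hMeq, Matrix.det_updateRow_smul]
      congr 1
      have : (fun q => Yv ⟨m - 1, hiv⟩ q) = (Matrix.of fun p q => Yv p q) ⟨m - 1, hiv⟩ := rfl
      rw [this, Matrix.updateRow_eq_self]
    have hsign : 0 < r := by nlinarith [hdetX', hdetY, hdetrel]
    have hr1 : r = 1 := by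
      rcases abs_cases r with ⟨h1, _⟩ | ⟨h1, h2⟩
      · linarith
      · linarith
    rw [hXr, hr1, one_smul]

theorem inner_deriv_frame {m : ℕ} {a b : ℝ} {σ : ℝ → E m} {X : Fin m → ℝ → E m}
    {κ : Fin m → ℝ → ℝ} (hm : 2 ≤ m) (hX : IsFrenetApparatus m a b σ X κ)
    {t : ℝ} (ht : t ∈ Set.Ioo a b) (iv : ℕ) (h1 : 1 ≤ iv) (h2 : iv < m) :
    ⟪deriv (X ⟨iv - 1, by omega⟩) t, X ⟨iv, h2⟩ t⟫
      = κ ⟨0, by omega⟩ t * κ ⟨iv, h2⟩ t := by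
  have h0 : 0 < m := by omega
  rw [frenet_deriv_eq hm hX ht ⟨iv - 1, by omega⟩]
  have horth := hX.orthonormal t ht
  have := horth.inner_left_fintype (fun j => frA h0 κ t ⟨iv - 1, by omega⟩ j) ⟨iv, h2⟩
  rw [this]
  show frA h0 κ t ⟨iv - 1, by omega⟩ ⟨iv, h2⟩ = _
  unfold frA
  rw [if_pos (show iv = (iv - 1) + 1 by omega), if_neg (show ¬ iv - 1 = iv + 1 by omega)]
  ring

theorem forward_dir {m : ℕ} {a b t₀ ε : ℝ} {σ σ' : ℝ → E m}
    {X X' : Fin m → ℝ → E m} {κ κ' : Fin m → ℝ → ℝ}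
    (hm : 2 ≤ m) (hsub : Set.Ioo (t₀ - ε) (t₀ + ε) ⊆ Set.Ioo a b)
    (hσ : IsFrenetCurve m a b σ)
    (hXσ : IsFrenetApparatus m a b σ X κ) (hXσ' : IsFrenetApparatus m a b σ' X' κ')
    (L : E m ≃ₗᵢ[ℝ] E m) (c : E m)
    (hdet : 0 < LinearMap.det (L.toLinearEquiv : E m →ₗ[ℝ] E m))
    (hcong : ∀ t ∈ Set.Ioo (t₀ - ε) (t₀ + ε), σ' t = L (σ t) + c) :
    ∀ t ∈ Set.Ioo (t₀ - ε) (t₀ + ε), ∀ i, κ i t = κ' i t := by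
  have h0 : 0 < m := by omega
  have hfr := frame_transport hm hsub hσ hXσ hXσ' L c hdet hcong
  have hiter := iter_transport L c isOpen_Ioo isOpen_Ioo hsub hσ.1 hcong
  intro t ht
  have htab := hsub ht
  have hXorth := hXσ.orthonormal t htab
  have hX'orth := hXσ'.orthonormal t htab
  -- derivative transport for the frame
  have hdX' : ∀ j : Fin m, deriv (X' j) t = L (deriv (X j) t) := by
    intro j
    have hev : X' j =ᶠ[nhds t] fun u => L (X j u) :=
      Filter.eventuallyEq_of_mem (isOpen_Ioo.mem_nhds ht) fun u hu => hfr u hu j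
    have hd : HasDerivAt (fun u => L (X j u)) (L (deriv (X j) t)) t :=
      hasDerivAt_isometry L
        (((hXσ.smooth_frame j).contDiffAt
          (isOpen_Ioo.mem_nhds htab)).differentiableAt (by simp)).hasDerivAt
    rw [hev.deriv_eq]
    exact hd.deriv
  have hderivσ' : deriv σ' t = L (deriv σ t) := by
    have := hiter 0 t ht
    rwa [show (0 + 1 : ℕ) = 1 from rfl, iteratedDeriv_one, iteratedDeriv_one] at this
  -- κ₀ equality
  have hκ0 : κ ⟨0, h0⟩ t = κ' ⟨0, h0⟩ t := by
    have e := hXσ.frenet_tangent t htab h0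
    have e' := hXσ'.frenet_tangent t htab h0
    have h1 : ⟪deriv σ t, X ⟨0, h0⟩ t⟫ = κ ⟨0, h0⟩ t := by
      rw [e, real_inner_smul_left, real_inner_self_eq_norm_mul_norm, hXorth.1 ⟨0, h0⟩]
      ring
    have h1' : ⟪deriv σ' t, X' ⟨0, h0⟩ t⟫ = κ' ⟨0, h0⟩ t := by
      rw [e', real_inner_smul_left, real_inner_self_eq_norm_mul_norm, hX'orth.1 ⟨0, h0⟩]
      ring
    rw [← h1, ← h1', hderivσ', hfr t ht ⟨0, h0⟩, L.inner_map_map]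
  have hκ0pos : 0 < κ ⟨0, h0⟩ t := hXσ.curv_pos ⟨0, h0⟩ (show (0:ℕ) < m - 1 by omega) t htab
  intro i
  obtain ⟨iv, hiv⟩ := i
  rcases Nat.eq_zero_or_pos iv with h0v | h1v
  · subst h0v
    exact hκ0
  · have hp := inner_deriv_frame hm hXσ htab iv h1v hiv
    have hp' := inner_deriv_frame hm hXσ' htab iv h1v hiv
    rw [hdX' ⟨iv - 1, by omega⟩, hfr t ht ⟨iv, hiv⟩, L.inner_map_map] at hp'
    rw [hp] at hp'
    -- hp' : κ0 * κ_iv = κ'0 * κ'_iv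
    have hκ0' : κ' ⟨0, by omega⟩ t = κ ⟨0, h0⟩ t := hκ0.symm
    rw [hκ0'] at hp'
    exact mul_left_cancel₀ (ne_of_gt hκ0pos) hp'
/-- **Congruence theorem for Frenet curves in Euclidean space.**
Two Frenet curves `σ, σ̄ : (a,b) → ℝᵐ` (`m ≥ 2`) are congruent near `t₀` under an
orientation-preserving affine isometry `φ(x) = L x + c` (`L ∈ SO(m)`, `c ∈ ℝᵐ`)
if and only if their curvatures agree near `t₀`. -/
theorem frenet_congruence_iff_equal_curvatures
    (m : ℕ) (hm : 2 ≤ m) (a b t₀ : ℝ) (ht₀ : t₀ ∈ Set.Ioo a b)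
    (σ σ' : ℝ → E m) (X X' : Fin m → ℝ → E m) (κ κ' : Fin m → ℝ → ℝ)
    (hσ : IsFrenetCurve m a b σ) (hσ' : IsFrenetCurve m a b σ')
    (hXσ : IsFrenetApparatus m a b σ X κ)
    (hXσ' : IsFrenetApparatus m a b σ' X' κ') :
    (∃ ε > 0, Set.Ioo (t₀ - ε) (t₀ + ε) ⊆ Set.Ioo a b ∧
        ∃ (L : E m ≃ₗᵢ[ℝ] E m) (c : E m),
          0 < LinearMap.det (L.toLinearEquiv : E m →ₗ[ℝ] E m) ∧
          ∀ t, |t - t₀| < ε → σ' t = L (σ t) + c)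
      ↔
    (∃ ε > 0, Set.Ioo (t₀ - ε) (t₀ + ε) ⊆ Set.Ioo a b ∧
        ∀ t, |t - t₀| < ε → ∀ i : Fin m, κ i t = κ' i t) := by
  constructor
  · rintro ⟨ε, hε, hsub, L, c, hdet, hcong⟩
    refine ⟨ε, hε, hsub, ?_⟩
    intro t htabs i
    obtain ⟨hl, hr⟩ := abs_lt.mp htabs
    have htJ : t ∈ Set.Ioo (t₀ - ε) (t₀ + ε) := ⟨by linarith, by linarith⟩
    have hcong' : ∀ u ∈ Set.Ioo (t₀ - ε) (t₀ + ε), σ' u = L (σ u) + c := fun u hu =>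
      hcong u (abs_lt.mpr ⟨by linarith [hu.1], by linarith [hu.2]⟩)
    exact forward_dir hm hsub hσ hXσ hXσ' L c hdet hcong' t htJ i
  · rintro ⟨ε, hε, hsub, hκ⟩
    have hκ' : ∀ t ∈ Set.Ioo (t₀ - ε) (t₀ + ε), ∀ i, κ i t = κ' i t := fun t htJ i =>
      hκ t (abs_lt.mpr ⟨by linarith [htJ.1], by linarith [htJ.2]⟩) i
    obtain ⟨L, c, hdet, hcong⟩ := backward_dir hm hε hsub hσ hσ' hXσ hXσ' hκ'
    refine ⟨ε, hε, hsub, L, c, hdet, ?_⟩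
    intro t htabs
    obtain ⟨hl, hr⟩ := abs_lt.mp htabs
    exact hcong t ⟨by linarith, by linarith⟩
end
end

section
/- Let m ≥ 1, let σ : ℝ → ℝ^m be a smooth curve and t_0 ∈ ℝ such that the iterated derivatives σ^{(1)}(t_0), …, σ^{(m−1)}(t_0) are linearly independent (σ is in normal general position up to order m−1 at t_0). Let A be a skew-symmetric real m×m matrix and b ∈ ℝ^m such that A σ(t_0) + b = 0 and A σ^{(k)}(t_0) = 0 for all 1 ≤ k ≤ m−1. Then A = 0 and b = 0. (Equivalently: a Killing vector field of Euclidean space whose (m−1)-jet prolongation vanishes at the (m−1)-jet of a curve in normal general position is identically zero.) -/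
open Matrix

/-- **Asymptotic-stability lemma for Euclidean space** (Theorem `stability` in the flat
case): if `σ : ℝ → ℝᵐ` is smooth and in normal general position up to order `m - 1`
at `t₀` (i.e. `σ⁽¹⁾(t₀), …, σ⁽ᵐ⁻¹⁾(t₀)` are linearly independent), and the Killing
vector field `x ↦ A x + b` of Euclidean space (`A` skew-symmetric) has vanishing
`(m-1)`-jet prolongation at the `(m-1)`-jet of `σ` at `t₀` — that is,
`A σ(t₀) + b = 0` and `A σ⁽ᵏ⁾(t₀) = 0` for `1 ≤ k ≤ m - 1` — then `A = 0` and `b = 0`. -/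
theorem killing_field_vanishing_on_normal_jet
    (m : ℕ) (hm : 1 ≤ m) (σ : ℝ → (Fin m → ℝ)) (hσ : ContDiff ℝ (⊤ : ℕ∞) σ) (t₀ : ℝ)
    (hind : LinearIndependent ℝ
      (fun k : Fin (m - 1) => iteratedDeriv ((k : ℕ) + 1) σ t₀))
    (A : Matrix (Fin m) (Fin m) ℝ) (hA : Aᵀ = -A) (b : Fin m → ℝ)
    (h0 : A.mulVec (σ t₀) + b = 0)
    (hk : ∀ k : ℕ, 1 ≤ k → k ≤ m - 1 → A.mulVec (iteratedDeriv k σ t₀) = 0) :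
    A = 0 ∧ b = 0 := by
  have skew : ∀ u w : Fin m → ℝ, A.mulVec u ⬝ᵥ w = - (u ⬝ᵥ A.mulVec w) := by
    intro u w
    rw [Matrix.dotProduct_mulVec, ← Matrix.mulVec_transpose, hA, Matrix.neg_mulVec,
      neg_dotProduct, neg_neg]
  set v : Fin (m - 1) → (Fin m → ℝ) := fun k => iteratedDeriv ((k : ℕ) + 1) σ t₀ with hv
  have hvker : ∀ k, A.mulVec (v k) = 0 := by
    intro k
    apply hk _ (Nat.succ_le_succ (Nat.zero_le _))
    have := k.isLt; omega
  set W := Submodule.span ℝ (Set.range v) with hW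
  have hWker : ∀ x ∈ W, A.mulVec x = 0 := by
    intro x hx
    have hle : W ≤ LinearMap.ker A.mulVecLin := by
      rw [hW, Submodule.span_le]
      rintro _ ⟨k, rfl⟩
      simpa using hvker k
    simpa using hle hx
  have key : ∀ x, A.mulVec x = 0 := by
    intro x
    by_cases hx : x ∈ W
    · exact hWker x hx
    · -- x ∉ W, so W ⊔ span{x} = ⊤
      set S := W ⊔ Submodule.span ℝ {x} with hS
      have hxS : x ∈ S := Submodule.mem_sup_right (Submodule.mem_span_singleton_self x)
      have hlt : W < S := lt_of_le_of_ne le_sup_left (by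
        intro h
        exact hx (h ▸ hxS))
      have hfrW : Module.finrank ℝ W = m - 1 := by
        rw [hW, finrank_span_eq_card hind]
        simp
      have hfr : Module.finrank ℝ S = m := by
        have h1 : Module.finrank ℝ W < Module.finrank ℝ S :=
          Submodule.finrank_lt_finrank_of_lt hlt
        have h2 : Module.finrank ℝ S ≤ Module.finrank ℝ (Fin m → ℝ) :=
          Submodule.finrank_le S
        rw [Module.finrank_fin_fun] at h2
        omega
      have htop : S = ⊤ := by
        apply Submodule.eq_top_of_finrank_eq
        rw [hfr, Module.finrank_fin_fun]
      -- functional y ↦ ⟨Ax, y⟩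
      let f : (Fin m → ℝ) →ₗ[ℝ] ℝ :=
        { toFun := fun y => A.mulVec x ⬝ᵥ y
          map_add' := fun a c => dotProduct_add _ _ _
          map_smul' := fun r a => by simp [dotProduct_smul] }
      have hfW : W ≤ LinearMap.ker f := by
        rw [hW, Submodule.span_le]
        rintro _ ⟨k, rfl⟩
        simp only [SetLike.mem_coe, LinearMap.mem_ker]
        show A.mulVec x ⬝ᵥ v k = 0
        rw [skew, hvker k, dotProduct_zero, neg_zero]
      have hfx : f x = 0 := by
        show A.mulVec x ⬝ᵥ x = 0
        have h1 := skew x x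
        rw [dotProduct_comm]
        rw [dotProduct_comm (A.mulVec x) x] at h1
        linarith
      have hfS : S ≤ LinearMap.ker f := by
        rw [hS]
        apply sup_le hfW
        rw [Submodule.span_le, Set.singleton_subset_iff]
        exact hfx
      have hAx : f (A.mulVec x) = 0 := by
        have : A.mulVec x ∈ S := htop ▸ Submodule.mem_top
        exact hfS this
      have : A.mulVec x ⬝ᵥ A.mulVec x = 0 := hAx
      exact dotProduct_self_eq_zero.mp this
  have hA0 : A = 0 := by
    ext i j
    have := congrFun (key (Pi.single j 1)) i
    simpa [Matrix.mulVec_single] using this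
  refine ⟨hA0, ?_⟩
  have := h0
  rw [hA0] at this
  simpa using this
end

section
/- Let m ≥ 1, 1 ≤ r ≤ m, t_0 ∈ ℝ, x_0 ∈ ℝ^m, and let A = (a_{hi}) be a symmetric positive semidefinite real r×r matrix. Then there exists a smooth curve σ : ℝ → ℝ^m with σ(t_0) = x_0 and ⟨σ^{(h)}(t_0), σ^{(i)}(t_0)⟩ = a_{hi} for all 1 ≤ h, i ≤ r. (Surjectivity of the Gram-matrix map on r-jets of curves in Euclidean space onto the set Q^r of positive semidefinite symmetric matrices.) -/
open scoped RealInnerProductSpace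

section Aux

variable {E : Type*} [NormedAddCommGroup E] [NormedSpace ℝ E]

lemma iteratedDeriv_zero_fun' (n : ℕ) (x : ℝ) :
    iteratedDeriv n (fun _ : ℝ => (0 : E)) x = 0 := by
  induction n generalizing x with
  | zero => simp
  | succ n ih =>
    rw [iteratedDeriv_succ']
    simp only [deriv_const']
    exact ih x

lemma iteratedDeriv_monomial_smul (c : ℝ) (j : ℕ) (v : E) (n : ℕ) :
    iteratedDeriv n (fun t : ℝ => (t - c) ^ j • v) =
      fun t => ((j.descFactorial n : ℝ) * (t - c) ^ (j - n)) • v := by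
  induction n with
  | zero => simp
  | succ n ih =>
    rw [iteratedDeriv_succ, ih]
    funext t
    have hd : HasDerivAt (fun t : ℝ => ((j.descFactorial n : ℝ) * (t - c) ^ (j - n)) • v)
        (((j.descFactorial n : ℝ) * ((j - n : ℕ) * (t - c) ^ (j - n - 1) * 1)) • v) t :=
      ((((hasDerivAt_id t).sub_const c).pow (j - n)).const_mul
        ((j.descFactorial n : ℝ))).smul_const v
    rw [hd.deriv]
    congr 1
    rw [Nat.descFactorial_succ, Nat.sub_sub]
    push_cast
    ring

lemma iteratedDeriv_monomial_smul_self (c : ℝ) (j : ℕ) (v : E) (n : ℕ) :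
    iteratedDeriv n (fun t : ℝ => (t - c) ^ j • v) c =
      if n = j then (j.factorial : ℝ) • v else 0 := by
  rw [iteratedDeriv_monomial_smul]
  simp only
  rcases lt_trichotomy n j with h | h | h
  · rw [if_neg h.ne, sub_self, zero_pow (by omega)]
    simp
  · subst h
    rw [if_pos rfl, Nat.sub_self, pow_zero, Nat.descFactorial_self, mul_one]
  · rw [if_neg h.ne', Nat.descFactorial_eq_zero_iff_lt.2 h]
    simp

lemma contDiff_monomial_smul (c : ℝ) (j : ℕ) (v : E) :
    ContDiff ℝ (⊤ : ℕ∞) (fun t : ℝ => (t - c) ^ j • v) :=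
  ((contDiff_id.sub contDiff_const).pow j).smul contDiff_const

lemma iteratedDeriv_fun_sum' {ι : Type*} [DecidableEq ι] (s : Finset ι) (f : ι → ℝ → E) (n : ℕ)
    (hf : ∀ k ∈ s, ContDiff ℝ (⊤ : ℕ∞) (f k)) (x : ℝ) :
    iteratedDeriv n (fun t => ∑ k ∈ s, f k t) x = ∑ k ∈ s, iteratedDeriv n (f k) x := by
  induction s using Finset.induction with
  | empty => simpa using iteratedDeriv_zero_fun' (E := E) n x
  | insert _ _ hk ih =>
    rename_i a s
    simp only [Finset.sum_insert hk]
    have h1 : (fun t => f a t + ∑ k ∈ s, f k t) = f a + fun t => ∑ k ∈ s, f k t := rfl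
    rw [h1, ← iteratedDerivWithin_univ,
      iteratedDerivWithin_add (Set.mem_univ x) uniqueDiffOn_univ
        ((hf a (Finset.mem_insert_self a s)).of_le (by exact_mod_cast le_top)).contDiffWithinAt
        ((ContDiff.sum fun k hks =>
          (hf k (Finset.mem_insert_of_mem hks)).of_le (by exact_mod_cast le_top)).contDiffWithinAt),
      iteratedDerivWithin_univ, iteratedDerivWithin_univ,
      ih (fun k hks => hf k (Finset.mem_insert_of_mem hks))]

end Aux

/-- **Surjectivity of the Gram-matrix map on `r`-jets of curves in Euclidean space onto
the positive semidefinite symmetric matrices:** for `1 ≤ r ≤ m`, any symmetric positive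
semidefinite `r × r` matrix `A` is the Gram matrix `(⟨σ⁽ʰ⁾(t₀), σ⁽ⁱ⁾(t₀)⟩)` of the
derivatives of some smooth curve `σ : ℝ → ℝᵐ` with `σ(t₀) = x₀`. -/
theorem gram_map_surjective
    (m r : ℕ) (hm : 1 ≤ m) (hr1 : 1 ≤ r) (hrm : r ≤ m) (t₀ : ℝ)
    (x₀ : EuclideanSpace ℝ (Fin m))
    (A : Matrix (Fin r) (Fin r) ℝ) (hsymm : A.IsSymm) (hpos : A.PosSemidef) :
    ∃ σ : ℝ → EuclideanSpace ℝ (Fin m), ContDiff ℝ (⊤ : ℕ∞) σ ∧ σ t₀ = x₀ ∧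
      ∀ h i : Fin r,
        ⟪iteratedDeriv ((h : ℕ) + 1) σ t₀, iteratedDeriv ((i : ℕ) + 1) σ t₀⟫ = A h i := by
  classical
  obtain ⟨B, hBherm, hBB⟩ : ∃ B : Matrix (Fin r) (Fin r) ℝ, B.IsHermitian ∧ B * B = A :=
    open scoped MatrixOrder in
    ⟨CFC.sqrt A, (Matrix.nonneg_iff_posSemidef.1 (CFC.sqrt_nonneg A)).1, CFC.sqrt_mul_sqrt_self A hpos.nonneg⟩
  have hBsymm : ∀ a b : Fin r, B a b = B b a := by
    intro a b
    have := congrFun (congrFun hBherm.eq b) a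
    simpa [Matrix.conjTranspose_apply] using this
  -- the vectors
  set w : Fin r → EuclideanSpace ℝ (Fin m) :=
    fun k => WithLp.toLp 2 (fun j : Fin m => if hj : (j : ℕ) < r then B ⟨j, hj⟩ k else 0) with hw
  have hinner : ∀ h i : Fin r, ⟪w h, w i⟫ = A h i := by
    intro h i
    rw [PiLp.inner_apply]
    simp only [RCLike.inner_apply, starRingEnd_apply, star_trivial]
    have hAe : A h i = ∑ j : Fin r, B j h * B j i := by
      rw [← hBB, Matrix.mul_apply]
      exact Finset.sum_congr rfl fun j _ => by rw [hBsymm h j]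
    have hmap : ∑ x : Fin m, w h x * w i x =
        ∑ j : Fin r, w h (Fin.castLE hrm j) * w i (Fin.castLE hrm j) := by
      refine ((Finset.sum_subset (Finset.subset_univ
          ((Finset.univ : Finset (Fin r)).map
            ⟨Fin.castLE hrm, Fin.castLE_injective hrm⟩)) ?_).symm).trans
        (Finset.sum_map Finset.univ ⟨Fin.castLE hrm, Fin.castLE_injective hrm⟩
          (fun x => w h x * w i x))
      intro j _ hj
      have hjr : ¬ (j : ℕ) < r := by
        intro hlt
        exact hj (by
          simp only [Finset.mem_map, Finset.mem_univ, Function.Embedding.coeFn_mk, true_and]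
          exact ⟨⟨(j : ℕ), hlt⟩, by ext; simp [Fin.castLE]⟩)
      simp [hw, hjr]
    rw [Finset.sum_congr rfl fun x _ => mul_comm ((w i).ofLp x) ((w h).ofLp x)]
    rw [hmap, hAe]
    refine Finset.sum_congr rfl fun j _ => ?_
    simp [hw, Fin.castLE, Fin.is_lt]
  -- the curve
  set σ : ℝ → EuclideanSpace ℝ (Fin m) :=
    fun t => x₀ + ∑ k : Fin r, (((k : ℕ) + 1).factorial : ℝ)⁻¹ • ((t - t₀) ^ ((k : ℕ) + 1) • w k)
    with hσ
  have hsmooth : ∀ k : Fin r, ContDiff ℝ (⊤ : ℕ∞)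
      (fun t : ℝ => (((k : ℕ) + 1).factorial : ℝ)⁻¹ • ((t - t₀) ^ ((k : ℕ) + 1) • w k)) :=
    fun k => (contDiff_monomial_smul t₀ ((k : ℕ) + 1) (w k)).const_smul _
  have hderiv : ∀ n : Fin r, iteratedDeriv ((n : ℕ) + 1) σ t₀ = w n := by
    intro n
    have h1 : iteratedDeriv ((n : ℕ) + 1) σ t₀ =
        iteratedDeriv ((n : ℕ) + 1) (fun t => ∑ k : Fin r,
          (((k : ℕ) + 1).factorial : ℝ)⁻¹ • ((t - t₀) ^ ((k : ℕ) + 1) • w k)) t₀ := by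
      rw [hσ, ← iteratedDerivWithin_univ, ← iteratedDerivWithin_univ]
      exact iteratedDerivWithin_const_add (Nat.succ_pos _) x₀
    rw [h1, iteratedDeriv_fun_sum' _ _ _ (fun k _ => hsmooth k)]
    have h2 : ∀ k : Fin r, iteratedDeriv ((n : ℕ) + 1)
        (fun t => (((k : ℕ) + 1).factorial : ℝ)⁻¹ • ((t - t₀) ^ ((k : ℕ) + 1) • w k)) t₀ =
        if k = n then w k else 0 := by
      intro k
      rw [show (fun t => (((k : ℕ) + 1).factorial : ℝ)⁻¹ • ((t - t₀) ^ ((k : ℕ) + 1) • w k))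
          = (((k : ℕ) + 1).factorial : ℝ)⁻¹ • (fun t => (t - t₀) ^ ((k : ℕ) + 1) • w k) from rfl,
        ← iteratedDerivWithin_univ,
        iteratedDerivWithin_const_smul (Set.mem_univ t₀) uniqueDiffOn_univ _
          ((contDiff_monomial_smul t₀ ((k : ℕ) + 1) (w k)).of_le (by exact_mod_cast le_top)).contDiffWithinAt,
        iteratedDerivWithin_univ, iteratedDeriv_monomial_smul_self]
      have hiff : ((n : ℕ) + 1 = (k : ℕ) + 1) ↔ (k = n) := by
        constructor
        · intro hnk; exact Fin.ext (by omega)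
        · intro hnk; subst hnk; rfl
      by_cases hkn : k = n
      · rw [if_pos (hiff.2 hkn), if_pos hkn, smul_smul,
          inv_mul_cancel₀ (by positivity), one_smul]
      · rw [if_neg (fun hc => hkn (hiff.1 hc)), if_neg hkn, smul_zero]
    simp only [h2]
    simp
  refine ⟨σ, ?_, ?_, ?_⟩
  · exact contDiff_const.add (ContDiff.sum fun k _ => hsmooth k)
  · simp [hσ, sub_self]
  · intro h i
    rw [hderiv h, hderiv i, hinner]
end

section
/- Let m ≥ 1, 1 ≤ r ≤ m, t_0 ∈ ℝ, and let σ, τ : ℝ → ℝ^m be smooth curves. Then the following are equivalent: (i) there exists an affine isometry φ of ℝ^m, φ(x) = Lx + c with L ∈ O(m) and c ∈ ℝ^m, such that φ(σ(t_0)) = τ(t_0) and L σ^{(k)}(t_0) = τ^{(k)}(t_0) for all 1 ≤ k ≤ r; (ii) ⟨σ^{(h)}(t_0), σ^{(i)}(t_0)⟩ = ⟨τ^{(h)}(t_0), τ^{(i)}(t_0)⟩ for all 1 ≤ h, i ≤ r. (Two r-jets of curves in Euclidean space are congruent under the isometry group if and only if they have the same Gram matrix of derivatives.) -/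
open scoped RealInnerProductSpace

lemma gram_eq_exists_isometryEquiv {ι : Type*} [Fintype ι] [DecidableEq ι]
    {m : ℕ} (v w : ι → EuclideanSpace ℝ (Fin m))
    (hgram : ∀ i j, ⟪v i, v j⟫ = ⟪w i, w j⟫) :
    ∃ L : EuclideanSpace ℝ (Fin m) ≃ₗᵢ[ℝ] EuclideanSpace ℝ (Fin m), ∀ i, L (v i) = w i := by
  let F : (ι → ℝ) →ₗ[ℝ] EuclideanSpace ℝ (Fin m) := Fintype.linearCombination ℝ v
  let G : (ι → ℝ) →ₗ[ℝ] EuclideanSpace ℝ (Fin m) := Fintype.linearCombination ℝ w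
  have hFG : ∀ a b, ⟪F a, F b⟫ = ⟪G a, G b⟫ := by
    intro a b
    simp only [F, G, Fintype.linearCombination_apply, inner_sum, sum_inner,
      real_inner_smul_left, real_inner_smul_right]
    exact Finset.sum_congr rfl fun i _ => Finset.sum_congr rfl fun j _ => by rw [hgram j i]
  have hnorm : ∀ a, ‖F a‖ = ‖G a‖ := by
    intro a
    rw [@norm_eq_sqrt_re_inner ℝ, @norm_eq_sqrt_re_inner ℝ, hFG]
  have hker : LinearMap.ker F ≤ LinearMap.ker G := by
    intro a ha
    have h0 : F a = 0 := LinearMap.mem_ker.mp ha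
    have : ‖G a‖ = 0 := by rw [← hnorm, h0, norm_zero]
    simpa [LinearMap.mem_ker] using norm_eq_zero.mp this
  let J : ↥(LinearMap.range F) →ₗ[ℝ] EuclideanSpace ℝ (Fin m) :=
    ((LinearMap.ker F).liftQ G hker).comp (F.quotKerEquivRange.symm.toLinearMap)
  have hJ : ∀ a : ι → ℝ, J ⟨F a, LinearMap.mem_range_self F a⟩ = G a := by
    intro a
    simp only [J, LinearMap.coe_comp, Function.comp_apply, LinearEquiv.coe_coe,
      LinearMap.quotKerEquivRange_symm_apply_image, Submodule.mkQ_apply, Submodule.liftQ_apply]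
  have hJnorm : ∀ x : ↥(LinearMap.range F), ‖J x‖ = ‖x‖ := by
    rintro ⟨_, a, rfl⟩
    rw [show (⟨F a, ⟨a, rfl⟩⟩ : ↥(LinearMap.range F)) = ⟨F a, LinearMap.mem_range_self F a⟩
      from rfl, hJ]
    rw [Submodule.coe_norm, hnorm]
  let Jiso : ↥(LinearMap.range F) →ₗᵢ[ℝ] EuclideanSpace ℝ (Fin m) := ⟨J, hJnorm⟩
  let L₀ : EuclideanSpace ℝ (Fin m) →ₗᵢ[ℝ] EuclideanSpace ℝ (Fin m) := Jiso.extend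
  refine ⟨L₀.toLinearIsometryEquiv rfl, fun i => ?_⟩
  have hv : F (Pi.single i 1) = v i := by
    rw [Fintype.linearCombination_apply_single, one_smul]
  have hmem : v i ∈ LinearMap.range F := hv ▸ LinearMap.mem_range_self F _
  have : L₀ (v i) = w i := by
    have := Jiso.extend_apply ⟨v i, hmem⟩
    rw [show ((⟨v i, hmem⟩ : ↥(LinearMap.range F)) : EuclideanSpace ℝ (Fin m)) = v i from rfl] at this
    rw [this]
    show J ⟨v i, hmem⟩ = w i
    have : (⟨v i, hmem⟩ : ↥(LinearMap.range F))
        = ⟨F (Pi.single i 1), LinearMap.mem_range_self F _⟩ := by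
      exact Subtype.ext hv.symm
    rw [this, hJ, show G (Pi.single i 1) = w i by
      rw [Fintype.linearCombination_apply_single, one_smul]]
  exact this

/-- **Two `r`-jets of curves in Euclidean space are congruent under the isometry group
iff they have the same Gram matrix of derivatives:** for `1 ≤ r ≤ m` and smooth curves
`σ, τ : ℝ → ℝᵐ`, there is an affine isometry `φ(x) = L x + c` (`L ∈ O(m)`, `c ∈ ℝᵐ`)
with `φ(σ(t₀)) = τ(t₀)` and `L σ⁽ᵏ⁾(t₀) = τ⁽ᵏ⁾(t₀)` for `1 ≤ k ≤ r`, if and only if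
`⟨σ⁽ʰ⁾(t₀), σ⁽ⁱ⁾(t₀)⟩ = ⟨τ⁽ʰ⁾(t₀), τ⁽ⁱ⁾(t₀)⟩` for all `1 ≤ h, i ≤ r`. -/
theorem jets_congruent_iff_gram_eq
    (m r : ℕ) (hm : 1 ≤ m) (hr1 : 1 ≤ r) (hrm : r ≤ m) (t₀ : ℝ)
    (σ τ : ℝ → EuclideanSpace ℝ (Fin m))
    (hσ : ContDiff ℝ (⊤ : ℕ∞) σ) (hτ : ContDiff ℝ (⊤ : ℕ∞) τ) :
    (∃ (L : EuclideanSpace ℝ (Fin m) ≃ₗᵢ[ℝ] EuclideanSpace ℝ (Fin m))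
        (c : EuclideanSpace ℝ (Fin m)),
        L (σ t₀) + c = τ t₀ ∧
        ∀ k : ℕ, 1 ≤ k → k ≤ r → L (iteratedDeriv k σ t₀) = iteratedDeriv k τ t₀)
      ↔
    (∀ h i : ℕ, 1 ≤ h → h ≤ r → 1 ≤ i → i ≤ r →
        ⟪iteratedDeriv h σ t₀, iteratedDeriv i σ t₀⟫
          = ⟪iteratedDeriv h τ t₀, iteratedDeriv i τ t₀⟫) := by
  constructor
  · rintro ⟨L, c, -, hL⟩ h i h1 h2 i1 i2
    rw [← hL h h1 h2, ← hL i i1 i2, LinearIsometryEquiv.inner_map_map]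
  · intro hgram
    obtain ⟨L, hL⟩ := gram_eq_exists_isometryEquiv
      (fun k : Fin r => iteratedDeriv (k + 1) σ t₀)
      (fun k : Fin r => iteratedDeriv (k + 1) τ t₀)
      (fun i j => hgram (i + 1) (j + 1) (Nat.succ_le_succ (Nat.zero_le _)) i.2
        (Nat.succ_le_succ (Nat.zero_le _)) j.2)
    refine ⟨L, τ t₀ - L (σ t₀), by abel, fun k k1 k2 => ?_⟩
    have := hL ⟨k - 1, by omega⟩
    simpa [Nat.sub_add_cancel k1] using this
end

section
/- Let m ≥ 2 and let σ, σ̄ : (a,b) → ℝ^m be two Frenet curves with Frenet apparatuses (X_i, κ_i^σ) and (X̄_i, κ_i^σ̄). Then |κ_i^σ(t)| = |κ_i^σ̄(t)| for all 0 ≤ i ≤ m−1 and all t ∈ (a,b) if and only if ⟨σ^{(i)}(t), σ^{(j)}(t)⟩ = ⟨σ̄^{(i)}(t), σ̄^{(j)}(t)⟩ for all 1 ≤ i, j ≤ m and all t ∈ (a,b). -/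
open scoped RealInnerProductSpace

noncomputable section

section AuxCalc

variable {F : Type*} [NormedAddCommGroup F] [NormedSpace ℝ F]

lemma iteratedDeriv_eqOn_open {f : ℝ → F} {s : Set ℝ} (hs : IsOpen s) (n : ℕ) :
    Set.EqOn (iteratedDerivWithin n f s) (iteratedDeriv n f) s := fun x hx => by
  rw [iteratedDerivWithin_eq_iteratedFDerivWithin, iteratedDeriv_eq_iteratedFDeriv,
    iteratedFDerivWithin_of_isOpen n hs hx]

lemma hasDerivAt_iteratedDeriv_aux {f : ℝ → F} {s : Set ℝ} (hs : IsOpen s)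
    (hf : ContDiffOn ℝ (⊤ : ℕ∞) f s) {t : ℝ} (ht : t ∈ s) (n : ℕ) :
    HasDerivAt (iteratedDeriv n f) (iteratedDeriv (n + 1) f t) t := by
  have hu : UniqueDiffOn ℝ s := hs.uniqueDiffOn
  have hdiff : DifferentiableWithinAt ℝ (iteratedDerivWithin n f s) s t :=
    hf.differentiableOn_iteratedDerivWithin (by exact_mod_cast lt_top_iff_ne_top.2 (by simp)) hu t ht
  have h1 : HasDerivWithinAt (iteratedDerivWithin n f s)
      (iteratedDerivWithin (n + 1) f s t) s t := by
    have := hdiff.hasDerivWithinAt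
    rwa [← iteratedDerivWithin_succ] at this
  have h2 := h1.hasDerivAt (hs.mem_nhds ht)
  have h3 : HasDerivAt (iteratedDeriv n f) (iteratedDerivWithin (n + 1) f s t) t :=
    h2.congr_of_eventuallyEq (Filter.eventuallyEq_of_mem (hs.mem_nhds ht)
      fun x hx => (iteratedDeriv_eqOn_open hs n hx).symm)
  rwa [show iteratedDerivWithin (n + 1) f s t = iteratedDeriv (n + 1) f t from
    iteratedDeriv_eqOn_open hs (n + 1) ht] at h3

end AuxCalc

section GG

variable {m : ℕ} {a b : ℝ} {σ : ℝ → E m} {X : Fin m → ℝ → E m} {κ : Fin m → ℝ → ℝ}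

/-- Coefficient of `σ⁽ⁿ⁾(t)` on the frame vector `X k t`. -/
def gg (m : ℕ) (σ : ℝ → E m) (X : Fin m → ℝ → E m) (n : ℕ) (k : Fin m) (t : ℝ) : ℝ :=
  ⟪iteratedDeriv n σ t, X k t⟫

lemma onb_expand (hm : 1 ≤ m) (hX : IsFrenetApparatus m a b σ X κ) {t : ℝ}
    (ht : t ∈ Set.Ioo a b) (u v : E m) :
    ⟪u, v⟫ = ∑ k, ⟪u, X k t⟫ * ⟪v, X k t⟫ := by
  have ho := hX.orthonormal t ht
  have : Nonempty (Fin m) := ⟨⟨0, by omega⟩⟩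
  have hsp : ⊤ ≤ Submodule.span ℝ (Set.range fun i => X i t) := by
    rw [ho.linearIndependent.span_eq_top_of_card_eq_finrank (by simp)]
  let bb := OrthonormalBasis.mk ho hsp
  have hb : ∀ k, bb k = X k t := fun k => by
    simp only [bb, OrthonormalBasis.coe_mk]
  calc ⟪u, v⟫ = ∑ k, ⟪u, bb k⟫ * ⟪bb k, v⟫ := (bb.sum_inner_mul_inner u v).symm
  _ = ∑ k, ⟪u, X k t⟫ * ⟪v, X k t⟫ := by
      refine Finset.sum_congr rfl fun k _ => ?_
      rw [hb, real_inner_comm (X k t) v]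

lemma gg_gram (hm : 1 ≤ m) (hX : IsFrenetApparatus m a b σ X κ) {t : ℝ}
    (ht : t ∈ Set.Ioo a b) (i j : ℕ) :
    ⟪iteratedDeriv i σ t, iteratedDeriv j σ t⟫ = ∑ k, gg m σ X i k t * gg m σ X j k t :=
  onb_expand hm hX ht _ _

lemma gg_tri (hX : IsFrenetApparatus m a b σ X κ) {t : ℝ} (ht : t ∈ Set.Ioo a b)
    {n : ℕ} (h1 : 1 ≤ n) (h2 : n ≤ m - 1) {k : Fin m} (hk : n ≤ (k : ℕ)) :
    gg m σ X n k t = 0 := by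
  have hkm := k.isLt
  have hlt : n - 1 < m - 1 := by omega
  have hsp := hX.span_eq t ht (n - 1) hlt
  have hmem : iteratedDeriv n σ t ∈ Submodule.span ℝ
      (Set.range fun h : Fin (n - 1 + 1) => X (Fin.castLE (by omega) h) t) := by
    rw [hsp]
    apply Submodule.subset_span
    refine ⟨⟨n - 1, by omega⟩, ?_⟩
    have hn : n - 1 + 1 = n := by omega
    simp [hn]
  rw [Submodule.mem_span_range_iff_exists_fun] at hmem
  obtain ⟨c, hc⟩ := hmem
  have ho := hX.orthonormal t ht
  rw [gg, ← hc, sum_inner]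
  refine Finset.sum_eq_zero fun j _ => ?_
  rw [real_inner_smul_left, ho.2 ?_, mul_zero]
  have hj := j.isLt
  intro hjk
  have : ((Fin.castLE (by omega : n - 1 + 1 ≤ m) j : Fin m) : ℕ) = (k : ℕ) := by rw [hjk]
  simp only [Fin.coe_castLE] at this
  omega

lemma gg_pos (hX : IsFrenetApparatus m a b σ X κ) {t : ℝ} (ht : t ∈ Set.Ioo a b)
    {n : ℕ} (h1 : 1 ≤ n) (h2 : n ≤ m - 1) :
    0 < gg m σ X n ⟨n - 1, by omega⟩ t := by
  have h := hX.same_orient t ht (n - 1) (by omega)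
  have hn : n - 1 + 1 = n := by omega
  rw [hn] at h
  exact h

lemma gg_rec (hσ : IsFrenetCurve m a b σ) (hX : IsFrenetApparatus m a b σ X κ)
    {t : ℝ} (ht : t ∈ Set.Ioo a b) (n : ℕ) (k : Fin m) :
    gg m σ X (n + 1) k t
      = deriv (gg m σ X n k) t - ⟪iteratedDeriv n σ t, deriv (X k) t⟫ := by
  have h1 : HasDerivAt (iteratedDeriv n σ) (iteratedDeriv (n + 1) σ t) t :=
    hasDerivAt_iteratedDeriv_aux isOpen_Ioo hσ.1 ht n
  have h2 : HasDerivAt (X k) (deriv (X k) t) t := by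
    apply DifferentiableAt.hasDerivAt
    exact ((hX.smooth_frame k).differentiableOn (by simp)).differentiableAt
      (isOpen_Ioo.mem_nhds ht)
  have h3 := HasDerivAt.inner ℝ h1 h2
  have h4 : deriv (gg m σ X n k) t
      = ⟪iteratedDeriv n σ t, deriv (X k) t⟫ + ⟪iteratedDeriv (n + 1) σ t, X k t⟫ := h3.deriv
  simp only [gg] at *
  rw [h4]
  ring

lemma gg_rec_zero (hm : 2 ≤ m) (hσ : IsFrenetCurve m a b σ)
    (hX : IsFrenetApparatus m a b σ X κ) {t : ℝ} (ht : t ∈ Set.Ioo a b) (n : ℕ) :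
    gg m σ X (n + 1) ⟨0, by omega⟩ t
      = deriv (gg m σ X n ⟨0, by omega⟩) t
        - κ ⟨0, by omega⟩ t * κ ⟨1, by omega⟩ t * gg m σ X n ⟨1, by omega⟩ t := by
  rw [gg_rec hσ hX ht n, hX.frenet_first t ht (by omega)]
  simp only [gg, real_inner_smul_right]
  try ring

lemma gg_rec_mid (hσ : IsFrenetCurve m a b σ)
    (hX : IsFrenetApparatus m a b σ X κ) {t : ℝ} (ht : t ∈ Set.Ioo a b) (n i : ℕ)
    (h1 : 1 ≤ i) (h2 : i < m - 1) :
    gg m σ X (n + 1) ⟨i, by omega⟩ t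
      = deriv (gg m σ X n ⟨i, by omega⟩) t
        + κ ⟨0, by omega⟩ t * κ ⟨i, by omega⟩ t * gg m σ X n ⟨i - 1, by omega⟩ t
        - κ ⟨0, by omega⟩ t * κ ⟨i + 1, by omega⟩ t * gg m σ X n ⟨i + 1, by omega⟩ t := by
  rw [gg_rec hσ hX ht n, hX.frenet_mid t ht i h1 h2]
  simp only [gg, inner_add_right, real_inner_smul_right]
  try ring

lemma gg_rec_last (hm : 2 ≤ m) (hσ : IsFrenetCurve m a b σ)
    (hX : IsFrenetApparatus m a b σ X κ) {t : ℝ} (ht : t ∈ Set.Ioo a b) (n : ℕ) :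
    gg m σ X (n + 1) ⟨m - 1, by omega⟩ t
      = deriv (gg m σ X n ⟨m - 1, by omega⟩) t
        + κ ⟨0, by omega⟩ t * κ ⟨m - 1, by omega⟩ t * gg m σ X n ⟨m - 2, by omega⟩ t := by
  rw [gg_rec hσ hX ht n, hX.frenet_last t ht hm]
  simp only [gg, real_inner_smul_right]
  try ring

lemma gg_one_zero (hm : 1 ≤ m) (hX : IsFrenetApparatus m a b σ X κ) {t : ℝ}
    (ht : t ∈ Set.Ioo a b) :
    gg m σ X 1 ⟨0, by omega⟩ t = κ ⟨0, by omega⟩ t := by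
  have ho := hX.orthonormal t ht
  have h1 := ho.1 ⟨0, by omega⟩
  rw [gg, iteratedDeriv_one, hX.frenet_tangent t ht (by omega), real_inner_smul_left,
    real_inner_self_eq_norm_sq, h1]
  ring

end GG

section GG2

variable {m : ℕ} {a b : ℝ} {σ : ℝ → E m} {X : Fin m → ℝ → E m} {κ : Fin m → ℝ → ℝ}

lemma gg_deriv_zero (hX : IsFrenetApparatus m a b σ X κ) {t : ℝ} (ht : t ∈ Set.Ioo a b)
    {n : ℕ} (h1 : 1 ≤ n) (h2 : n ≤ m - 1) {k : Fin m} (hk : n ≤ (k : ℕ)) :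
    deriv (gg m σ X n k) t = 0 := by
  have hev : gg m σ X n k =ᶠ[nhds t] fun _ => 0 :=
    Filter.eventuallyEq_of_mem (isOpen_Ioo.mem_nhds ht) fun x hx => gg_tri hX hx h1 h2 hk
  rw [hev.deriv_eq]
  simp

lemma gg_diag (hσ : IsFrenetCurve m a b σ) (hX : IsFrenetApparatus m a b σ X κ)
    {t : ℝ} (ht : t ∈ Set.Ioo a b) (i : ℕ) (h1 : 1 ≤ i) (h2 : i < m - 1) :
    gg m σ X (i + 1) ⟨i, by omega⟩ t
      = κ ⟨0, by omega⟩ t * κ ⟨i, by omega⟩ t * gg m σ X i ⟨i - 1, by omega⟩ t := by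
  rw [gg_rec_mid hσ hX ht i i h1 h2,
    gg_deriv_zero hX ht h1 (by omega) (le_refl (i : ℕ)),
    gg_tri hX ht h1 (by omega) (show i ≤ ((⟨i + 1, by omega⟩ : Fin m) : ℕ) by simp)]
  ring

lemma gg_last (hm : 2 ≤ m) (hσ : IsFrenetCurve m a b σ)
    (hX : IsFrenetApparatus m a b σ X κ) {t : ℝ} (ht : t ∈ Set.Ioo a b) :
    gg m σ X m ⟨m - 1, by omega⟩ t
      = κ ⟨0, by omega⟩ t * κ ⟨m - 1, by omega⟩ t * gg m σ X (m - 1) ⟨m - 2, by omega⟩ t := by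
  have h := gg_rec_last hm hσ hX ht (m - 1)
  rw [gg_deriv_zero hX ht (by omega) (le_refl (m - 1)) (show m - 1 ≤ m - 1 by omega),
    show m - 1 + 1 = m by omega] at h
  rw [h]
  ring

end GG2

/-- Uniqueness of "Cholesky-type" decompositions: two systems of row vectors with the same
triangularity and positivity pattern and equal pairwise inner products have equal entries
(below the last column). -/
lemma chol {m : ℕ} (hm : 2 ≤ m) (A B : ℕ → Fin m → ℝ)
    (hAt : ∀ n, 1 ≤ n → n ≤ m - 1 → ∀ k : Fin m, n ≤ (k : ℕ) → A n k = 0)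
    (hBt : ∀ n, 1 ≤ n → n ≤ m - 1 → ∀ k : Fin m, n ≤ (k : ℕ) → B n k = 0)
    (hAd : ∀ n, ∀ _ : 1 ≤ n, ∀ _ : n ≤ m - 1, 0 < A n ⟨n - 1, by omega⟩)
    (hBd : ∀ n, ∀ _ : 1 ≤ n, ∀ _ : n ≤ m - 1, 0 < B n ⟨n - 1, by omega⟩)
    (hG : ∀ i j, 1 ≤ i → i ≤ m → 1 ≤ j → j ≤ m →
      ∑ k, A i k * A j k = ∑ k, B i k * B j k) :
    ∀ n, 1 ≤ n → n ≤ m → ∀ k : Fin m, (k : ℕ) < n → (k : ℕ) < m - 1 → A n k = B n k := by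
  intro n
  induction n using Nat.strong_induction_on with
  | _ n IH =>
    intro hn1 hn2
    have inner : ∀ K : ℕ, K < n → K < m - 1 → ∀ k : Fin m, (k : ℕ) = K → A n k = B n k := by
      intro K
      induction K using Nat.strong_induction_on with
      | _ K IHK =>
        intro hKn hKm k' hkK
        have hkL : k' = (⟨K, by omega⟩ : Fin m) := Fin.ext (by simpa using hkK)
        rw [hkL]
        set k : Fin m := ⟨K, by omega⟩ with hL
        have hj1 : 1 ≤ K + 1 := by omega
        have hj2 : K + 1 ≤ m - 1 := by omega
        have hGnj := hG n (K + 1) hn1 hn2 hj1 (by omega)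
        have herase : ∀ l ∈ Finset.univ.erase k,
            A n l * A (K + 1) l = B n l * B (K + 1) l := by
          intro l hl
          have hlk : l ≠ k := Finset.ne_of_mem_erase hl
          have hlval : (l : ℕ) ≠ K := fun h => hlk (Fin.ext (by simpa [hL] using h))
          by_cases hge : K + 1 ≤ (l : ℕ)
          · rw [hAt (K + 1) hj1 hj2 l hge, hBt (K + 1) hj1 hj2 l hge]
            ring
          · have hlK : (l : ℕ) < K := by omega
            have e1 : A n l = B n l := IHK (l : ℕ) hlK (by omega) (by omega) l rfl
            have e2 : A (K + 1) l = B (K + 1) l := by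
              rcases Nat.lt_or_ge (K + 1) n with hlt | hge'
              · exact IH (K + 1) hlt hj1 (by omega) l (by omega) (by omega)
              · have : K + 1 = n := by omega
                rw [this]
                exact IHK (l : ℕ) hlK (by omega) (by omega) l rfl
            rw [e1, e2]
        rw [← Finset.sum_erase_add _ _ (Finset.mem_univ k),
          ← Finset.sum_erase_add _ _ (Finset.mem_univ k),
          Finset.sum_congr rfl herase] at hGnj
        have hmain : A n k * A (K + 1) k = B n k * B (K + 1) k := by linarith
        rcases Nat.lt_or_ge (K + 1) n with hlt | hge'
        · have e2 : A (K + 1) k = B (K + 1) k :=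
            IH (K + 1) hlt hj1 (by omega) k (by omega) (by omega)
          have hpos : 0 < B (K + 1) k := by
            have := hBd (K + 1) hj1 hj2
            have hfin : (⟨K + 1 - 1, by omega⟩ : Fin m) = k := Fin.ext (by simp [hL])
            rwa [hfin] at this
          rw [e2] at hmain
          exact mul_right_cancel₀ (ne_of_gt hpos) hmain
        · have hKn' : K + 1 = n := by omega
          rw [hKn'] at hmain
          have hposA : 0 < A n k := by
            have := hAd n hn1 (by omega)
            have hfin : (⟨n - 1, by omega⟩ : Fin m) = k := Fin.ext (by simp [hL]; omega)
            rwa [hfin] at this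
          have hposB : 0 < B n k := by
            have := hBd n hn1 (by omega)
            have hfin : (⟨n - 1, by omega⟩ : Fin m) = k := Fin.ext (by simp [hL]; omega)
            rwa [hfin] at this
          nlinarith
    intro k hk1 hk2
    exact inner (k : ℕ) hk1 hk2 k rfl

/-- **Equality of curvatures up to sign is equivalent to equality of Gram matrices of
derivatives** (Euclidean case of Proposition `lem2`): for two Frenet curves `σ, σ̄` on
`(a,b)` with curvatures `κᵢ, κ̄ᵢ`, one has `|κᵢ(t)| = |κ̄ᵢ(t)|` for all `0 ≤ i ≤ m-1`
and `t ∈ (a,b)` iff `⟨σ⁽ⁱ⁾(t), σ⁽ʲ⁾(t)⟩ = ⟨σ̄⁽ⁱ⁾(t), σ̄⁽ʲ⁾(t)⟩` for all `1 ≤ i,j ≤ m`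
and `t ∈ (a,b)`. -/
theorem abs_curvatures_eq_iff_gram_eq
    (m : ℕ) (hm : 2 ≤ m) (a b : ℝ)
    (σ σ' : ℝ → E m) (X X' : Fin m → ℝ → E m) (κ κ' : Fin m → ℝ → ℝ)
    (hσ : IsFrenetCurve m a b σ) (hσ' : IsFrenetCurve m a b σ')
    (hXσ : IsFrenetApparatus m a b σ X κ)
    (hXσ' : IsFrenetApparatus m a b σ' X' κ') :
    (∀ t ∈ Set.Ioo a b, ∀ i : Fin m, |κ i t| = |κ' i t|)
      ↔
    (∀ t ∈ Set.Ioo a b, ∀ i j : Fin m,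
      ⟪iteratedDeriv ((i : ℕ) + 1) σ t, iteratedDeriv ((j : ℕ) + 1) σ t⟫
        = ⟪iteratedDeriv ((i : ℕ) + 1) σ' t, iteratedDeriv ((j : ℕ) + 1) σ' t⟫) := by
  constructor
  · -- curvatures determine the Gram matrix
    intro habs
    have hkeq : ∀ iv : ℕ, ∀ hlt : iv < m - 1, ∀ s ∈ Set.Ioo a b,
        κ ⟨iv, by omega⟩ s = κ' ⟨iv, by omega⟩ s := by
      intro iv hlt s hs
      have h1 := hXσ.curv_pos ⟨iv, by omega⟩ hlt s hs
      have h2 := hXσ'.curv_pos ⟨iv, by omega⟩ hlt s hs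
      have h3 := habs s hs ⟨iv, by omega⟩
      rwa [abs_of_pos h1, abs_of_pos h2] at h3
    have hsqκ : ∀ s ∈ Set.Ioo a b,
        (κ ⟨m - 1, by omega⟩ s) ^ 2 = (κ' ⟨m - 1, by omega⟩ s) ^ 2 := by
      intro s hs
      have h := habs s hs ⟨m - 1, by omega⟩
      rw [← sq_abs (κ _ s), ← sq_abs (κ' _ s), h]
    -- all rows up to m - 1 agree
    have hrow : ∀ n, ∀ hn : 1 ≤ n, n ≤ m - 1 → ∀ s ∈ Set.Ioo a b, ∀ k : Fin m,
        gg m σ X n k s = gg m σ' X' n k s := by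
      intro n hn
      induction n, hn using Nat.le_induction with
      | base =>
        intro _ s hs k
        obtain ⟨kv, hkv⟩ := k
        rcases Nat.eq_zero_or_pos kv with rfl | hk1
        · rw [gg_one_zero (by omega) hXσ hs, gg_one_zero (by omega) hXσ' hs]
          exact hkeq 0 (by omega) s hs
        · rw [gg_tri (k := ⟨kv, hkv⟩) hXσ hs le_rfl (by omega) hk1,
            gg_tri (k := ⟨kv, hkv⟩) hXσ' hs le_rfl (by omega) hk1]
      | succ n hn IH =>
        intro hle s hs k
        have IH' := IH (by omega)
        have hder : ∀ kk : Fin m,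
            deriv (gg m σ X n kk) s = deriv (gg m σ' X' n kk) s := fun kk =>
          Filter.EventuallyEq.deriv_eq (Filter.eventuallyEq_of_mem
            (isOpen_Ioo.mem_nhds hs) fun x hx => IH' x hx kk)
        obtain ⟨kv, hkv⟩ := k
        rcases Nat.eq_zero_or_pos kv with rfl | hk1
        · rw [gg_rec_zero hm hσ hXσ hs n, gg_rec_zero hm hσ' hXσ' hs n, hder,
            hkeq 0 (by omega) s hs, hkeq 1 (by omega) s hs, IH' s hs ⟨1, by omega⟩]
        · by_cases hklast : kv < m - 1
          · rw [gg_rec_mid hσ hXσ hs n kv hk1 hklast, gg_rec_mid hσ' hXσ' hs n kv hk1 hklast,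
              hder, hkeq 0 (by omega) s hs, hkeq kv hklast s hs,
              IH' s hs ⟨kv - 1, by omega⟩]
            by_cases hc : kv + 1 < m - 1
            · rw [hkeq (kv + 1) hc s hs, IH' s hs ⟨kv + 1, by omega⟩]
            · rw [gg_tri (k := ⟨kv + 1, by omega⟩) hXσ hs hn (by omega)
                  (show n ≤ kv + 1 by omega),
                gg_tri (k := ⟨kv + 1, by omega⟩) hXσ' hs hn (by omega)
                  (show n ≤ kv + 1 by omega)]
              ring
          · -- kv = m - 1
            have hkv1 : kv = m - 1 := by omega
            subst hkv1
            rw [gg_rec_last hm hσ hXσ hs n, gg_rec_last hm hσ' hXσ' hs n, hder,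
              gg_tri (k := ⟨m - 2, by omega⟩) hXσ hs hn (by omega) (show n ≤ m - 2 by omega),
              gg_tri (k := ⟨m - 2, by omega⟩) hXσ' hs hn (by omega) (show n ≤ m - 2 by omega)]
            ring
    -- row m agrees on columns < m - 1
    have hrowm : ∀ s ∈ Set.Ioo a b, ∀ k : Fin m, (k : ℕ) < m - 1 →
        gg m σ X m k s = gg m σ' X' m k s := by
      intro s hs k hkm1
      have hder : ∀ kk : Fin m,
          deriv (gg m σ X (m - 1) kk) s = deriv (gg m σ' X' (m - 1) kk) s := fun kk =>
        Filter.EventuallyEq.deriv_eq (Filter.eventuallyEq_of_mem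
          (isOpen_Ioo.mem_nhds hs) fun x hx => hrow (m - 1) (by omega) le_rfl x hx kk)
      have hm1' : m - 1 + 1 = m := by omega
      obtain ⟨kv, hkv⟩ := k
      have hkm1' : kv < m - 1 := hkm1
      rcases Nat.eq_zero_or_pos kv with rfl | hk1
      · have h1 := gg_rec_zero hm hσ hXσ hs (m - 1)
        have h2 := gg_rec_zero hm hσ' hXσ' hs (m - 1)
        rw [hm1'] at h1 h2
        rw [h1, h2, hder, hkeq 0 (by omega) s hs]
        by_cases hc : 1 < m - 1
        · rw [hkeq 1 hc s hs, hrow (m - 1) (by omega) le_rfl s hs ⟨1, by omega⟩]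
        · rw [gg_tri (k := ⟨1, by omega⟩) hXσ hs (show 1 ≤ m - 1 by omega) le_rfl
              (show m - 1 ≤ 1 by omega),
            gg_tri (k := ⟨1, by omega⟩) hXσ' hs (show 1 ≤ m - 1 by omega) le_rfl
              (show m - 1 ≤ 1 by omega)]
          ring
      · have h1 := gg_rec_mid hσ hXσ hs (m - 1) kv hk1 hkm1'
        have h2 := gg_rec_mid hσ' hXσ' hs (m - 1) kv hk1 hkm1'
        rw [hm1'] at h1 h2
        rw [h1, h2, hder, hkeq 0 (by omega) s hs, hkeq kv hkm1' s hs,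
          hrow (m - 1) (by omega) le_rfl s hs ⟨kv - 1, by omega⟩]
        by_cases hc : kv + 1 < m - 1
        · rw [hkeq (kv + 1) hc s hs, hrow (m - 1) (by omega) le_rfl s hs ⟨kv + 1, by omega⟩]
        · rw [gg_tri (k := ⟨kv + 1, by omega⟩) hXσ hs (show 1 ≤ m - 1 by omega) le_rfl
              (show m - 1 ≤ kv + 1 by omega),
            gg_tri (k := ⟨kv + 1, by omega⟩) hXσ' hs (show 1 ≤ m - 1 by omega) le_rfl
              (show m - 1 ≤ kv + 1 by omega)]
          ring
    -- entries of any row on columns < m - 1 agree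
    have hent : ∀ n, 1 ≤ n → n ≤ m → ∀ k : Fin m, (k : ℕ) < m - 1 →
        ∀ s ∈ Set.Ioo a b, gg m σ X n k s = gg m σ' X' n k s := by
      intro n h1 h2 k hk s hs
      rcases Nat.lt_or_ge n m with h | h
      · exact hrow n h1 (by omega) s hs k
      · have hnm : n = m := by omega
        subst hnm
        exact hrowm s hs k hk
    -- products of last-column entries of row m agree
    have hlastcol : ∀ s ∈ Set.Ioo a b,
        gg m σ X m ⟨m - 1, by omega⟩ s * gg m σ X m ⟨m - 1, by omega⟩ s
          = gg m σ' X' m ⟨m - 1, by omega⟩ s * gg m σ' X' m ⟨m - 1, by omega⟩ s := by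
      intro s hs
      rw [gg_last hm hσ hXσ hs, gg_last hm hσ' hXσ' hs, hkeq 0 (by omega) s hs,
        hrow (m - 1) (by omega) le_rfl s hs ⟨m - 2, by omega⟩]
      have hq := hsqκ s hs
      linear_combination (κ' ⟨0, by omega⟩ s * gg m σ' X' (m - 1) ⟨m - 2, by omega⟩ s) ^ 2 * hq
    -- assemble the Gram identity
    intro t ht i j
    rw [gg_gram (by omega) hXσ ht ((i : ℕ) + 1) ((j : ℕ) + 1),
      gg_gram (by omega) hXσ' ht ((i : ℕ) + 1) ((j : ℕ) + 1),
      ← Finset.sum_erase_add _ _ (Finset.mem_univ (⟨m - 1, by omega⟩ : Fin m)),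
      ← Finset.sum_erase_add _ _ (Finset.mem_univ (⟨m - 1, by omega⟩ : Fin m))]
    have herase : ∀ l ∈ Finset.univ.erase (⟨m - 1, by omega⟩ : Fin m),
        gg m σ X ((i : ℕ) + 1) l t * gg m σ X ((j : ℕ) + 1) l t
          = gg m σ' X' ((i : ℕ) + 1) l t * gg m σ' X' ((j : ℕ) + 1) l t := by
      intro l hl
      have hne : l ≠ (⟨m - 1, by omega⟩ : Fin m) := Finset.ne_of_mem_erase hl
      have hlm := l.isLt
      have hlv : (l : ℕ) ≠ m - 1 := fun hv => hne (Fin.ext (by simpa using hv))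
      have hlm1 : (l : ℕ) < m - 1 := by omega
      rw [hent ((i : ℕ) + 1) (by omega) (by have := i.isLt; omega) l hlm1 t ht,
        hent ((j : ℕ) + 1) (by omega) (by have := j.isLt; omega) l hlm1 t ht]
    rw [Finset.sum_congr rfl herase]
    congr 1
    by_cases hI : (i : ℕ) + 1 ≤ m - 1
    · rw [gg_tri (k := ⟨m - 1, by omega⟩) hXσ ht (by omega) hI
          (show (i : ℕ) + 1 ≤ m - 1 from hI),
        gg_tri (k := ⟨m - 1, by omega⟩) hXσ' ht (by omega) hI
          (show (i : ℕ) + 1 ≤ m - 1 from hI)]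
      ring
    · have hI' : (i : ℕ) + 1 = m := by have := i.isLt; omega
      by_cases hJ : (j : ℕ) + 1 ≤ m - 1
      · rw [gg_tri (k := ⟨m - 1, by omega⟩) hXσ ht (by omega) hJ
            (show (j : ℕ) + 1 ≤ m - 1 from hJ),
          gg_tri (k := ⟨m - 1, by omega⟩) hXσ' ht (by omega) hJ
            (show (j : ℕ) + 1 ≤ m - 1 from hJ)]
        ring
      · have hJ' : (j : ℕ) + 1 = m := by have := j.isLt; omega
        rw [hI', hJ']
        exact hlastcol t ht
  · -- the Gram matrix determines the curvatures up to sign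
    intro hgram t ht i
    have hGr : ∀ p q : ℕ, 1 ≤ p → p ≤ m → 1 ≤ q → q ≤ m →
        ∑ k, gg m σ X p k t * gg m σ X q k t
          = ∑ k, gg m σ' X' p k t * gg m σ' X' q k t := by
      intro p q hp1 hp2 hq1 hq2
      rw [← gg_gram (by omega) hXσ ht p q, ← gg_gram (by omega) hXσ' ht p q]
      have h := hgram t ht ⟨p - 1, by omega⟩ ⟨q - 1, by omega⟩
      simpa [show p - 1 + 1 = p by omega, show q - 1 + 1 = q by omega] using h
    have key : ∀ n, 1 ≤ n → n ≤ m → ∀ k : Fin m, (k : ℕ) < n → (k : ℕ) < m - 1 →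
        gg m σ X n k t = gg m σ' X' n k t :=
      chol hm (fun n k => gg m σ X n k t) (fun n k => gg m σ' X' n k t)
        (fun n h1 h2 k hk => gg_tri hXσ ht h1 h2 hk)
        (fun n h1 h2 k hk => gg_tri hXσ' ht h1 h2 hk)
        (fun n h1 h2 => gg_pos hXσ ht h1 h2)
        (fun n h1 h2 => gg_pos hXσ' ht h1 h2) hGr
    have hκ0 : κ ⟨0, by omega⟩ t = κ' ⟨0, by omega⟩ t := by
      rw [← gg_one_zero (by omega) hXσ ht, ← gg_one_zero (by omega) hXσ' ht]
      exact key 1 le_rfl (by omega) ⟨0, by omega⟩ (show (0 : ℕ) < 1 by omega)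
        (show (0 : ℕ) < m - 1 by omega)
    have hκ0pos : 0 < κ ⟨0, by omega⟩ t :=
      hXσ.curv_pos ⟨0, by omega⟩ (show (0 : ℕ) < m - 1 by omega) t ht
    obtain ⟨iv, hiv⟩ := i
    rcases Nat.eq_zero_or_pos iv with rfl | h1
    · exact congrArg abs hκ0
    · by_cases hmid : iv < m - 1
      · have hdg := gg_diag hσ hXσ ht iv h1 hmid
        have hdg' := gg_diag hσ' hXσ' ht iv h1 hmid
        have hnum : gg m σ X (iv + 1) ⟨iv, by omega⟩ t
            = gg m σ' X' (iv + 1) ⟨iv, by omega⟩ t :=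
          key (iv + 1) (by omega) (by omega) ⟨iv, by omega⟩ (show iv < iv + 1 by omega)
            (show iv < m - 1 from hmid)
        have hden : gg m σ X iv ⟨iv - 1, by omega⟩ t
            = gg m σ' X' iv ⟨iv - 1, by omega⟩ t :=
          key iv h1 (by omega) ⟨iv - 1, by omega⟩ (show iv - 1 < iv by omega)
            (show iv - 1 < m - 1 by omega)
        have hdpos : 0 < gg m σ X iv ⟨iv - 1, by omega⟩ t := gg_pos hXσ ht h1 (by omega)
        have h := hdg.symm.trans (hnum.trans hdg')
        rw [← hκ0, ← hden] at h
        have h2 := mul_right_cancel₀ (ne_of_gt hdpos) h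
        have h3 := mul_left_cancel₀ (ne_of_gt hκ0pos) h2
        exact congrArg abs h3
      · have hivm : iv = m - 1 := by omega
        subst hivm
        have hsumsq := hGr m m (by omega) le_rfl (by omega) le_rfl
        have herase : ∀ l ∈ Finset.univ.erase (⟨m - 1, by omega⟩ : Fin m),
            gg m σ X m l t * gg m σ X m l t = gg m σ' X' m l t * gg m σ' X' m l t := by
          intro l hl
          have hne : l ≠ (⟨m - 1, by omega⟩ : Fin m) := Finset.ne_of_mem_erase hl
          have hlm := l.isLt
          have hlv : (l : ℕ) ≠ m - 1 := fun hv => hne (Fin.ext (by simpa using hv))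
          have hlm1 : (l : ℕ) < m - 1 := by omega
          rw [key m (by omega) le_rfl l (by omega) hlm1]
        rw [← Finset.sum_erase_add _ _ (Finset.mem_univ (⟨m - 1, by omega⟩ : Fin m)),
          ← Finset.sum_erase_add _ _ (Finset.mem_univ (⟨m - 1, by omega⟩ : Fin m)),
          Finset.sum_congr rfl herase] at hsumsq
        have hsq : gg m σ X m ⟨m - 1, by omega⟩ t * gg m σ X m ⟨m - 1, by omega⟩ t
            = gg m σ' X' m ⟨m - 1, by omega⟩ t * gg m σ' X' m ⟨m - 1, by omega⟩ t := by
          linarith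
        have hl1 := gg_last hm hσ hXσ ht
        have hl2 := gg_last hm hσ' hXσ' ht
        have hden : gg m σ X (m - 1) ⟨m - 2, by omega⟩ t
            = gg m σ' X' (m - 1) ⟨m - 2, by omega⟩ t :=
          key (m - 1) (by omega) (by omega) ⟨m - 2, by omega⟩ (show m - 2 < m - 1 by omega)
            (show m - 2 < m - 1 by omega)
        have hdpos : 0 < gg m σ X (m - 1) ⟨m - 2, by omega⟩ t := by
          have h := gg_pos hXσ ht (show 1 ≤ m - 1 by omega) le_rfl
          have hfin : (⟨m - 1 - 1, by omega⟩ : Fin m) = ⟨m - 2, by omega⟩ :=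
            Fin.ext (show m - 1 - 1 = m - 2 by omega)
          rwa [hfin] at h
        have hfinal : (κ ⟨m - 1, by omega⟩ t) ^ 2 = (κ' ⟨m - 1, by omega⟩ t) ^ 2 := by
          have h := hsq
          rw [hl1, hl2, ← hκ0, ← hden] at h
          have hne : κ ⟨0, by omega⟩ t * gg m σ X (m - 1) ⟨m - 2, by omega⟩ t ≠ 0 :=
            ne_of_gt (mul_pos hκ0pos hdpos)
          have h2 : (κ ⟨m - 1, by omega⟩ t) ^ 2
                * (κ ⟨0, by omega⟩ t * gg m σ X (m - 1) ⟨m - 2, by omega⟩ t) ^ 2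
              = (κ' ⟨m - 1, by omega⟩ t) ^ 2
                * (κ ⟨0, by omega⟩ t * gg m σ X (m - 1) ⟨m - 2, by omega⟩ t) ^ 2 := by
            linear_combination h
          exact mul_right_cancel₀ (pow_ne_zero 2 hne) h2
        exact (sq_eq_sq_iff_abs_eq_abs _ _).mp hfinal
end
end

section
/- Let G be a finite-dimensional real Lie group (a smooth manifold with smooth group operations) and let σ_1, σ_2 : ℝ → G be smooth curves. For a smooth curve σ, let ω(σ'(t)) ∈ T_e G denote the image of the velocity vector σ'(t) ∈ T_{σ(t)}G under the differential at σ(t) of the left translation by σ(t)^{−1} (the Maurer–Cartan form applied to the tangent vector). Then there exists γ ∈ G with σ_1(t) = γ · σ_2(t) for all t ∈ ℝ if and only if ω(σ_1'(t)) = ω(σ_2'(t)) for all t ∈ ℝ. -/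
/-!
If `σ₁ = γ σ₂`, the chain rule gives `σ₁' = dL_γ σ₂'`, and since differentials of left
translations compose, the Maurer–Cartan velocities agree. Conversely, write `σ₁ = v σ₂` with
`v = σ₁ σ₂⁻¹`. The product rule gives `σ₁' = dR_{σ₂} v' + dL_v σ₂'`, while equality of the
Maurer–Cartan velocities says precisely `σ₁' = dL_v σ₂'`. Differentials of right translations are
injective, so `v' = 0`, and `v` is constant because `ℝ` is connected.
-/

open scoped Manifold
open Function

section Manifold

variable {𝕜 : Type*} [NontriviallyNormedField 𝕜]
  {E : Type*} [NormedAddCommGroup E] [NormedSpace 𝕜 E]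
  {H : Type*} [TopologicalSpace H] {I : ModelWithCorners 𝕜 E H}
  {M : Type*} [TopologicalSpace M] [ChartedSpace H M]
  {E' : Type*} [NormedAddCommGroup E'] [NormedSpace 𝕜 E']
  {H' : Type*} [TopologicalSpace H'] {I' : ModelWithCorners 𝕜 E' H'}
  {N : Type*} [TopologicalSpace N] [ChartedSpace H' N]

theorem injective_mfderiv_of_leftInverse {f : M → N} {g : N → M} {x : M} (hgf : LeftInverse g f)
    (hg : MDifferentiableAt I' I g (f x)) (hf : MDifferentiableAt I I' f x) :
    Injective (mfderiv I I' f x) := by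
  have hid : mfderiv I I (g ∘ f) x = ContinuousLinearMap.id 𝕜 _ := by
    rw [hgf.comp_eq_id, mfderiv_id]
  rw [mfderiv_comp x hg hf] at hid
  intro v w h
  have hv := DFunLike.congr_fun hid v
  rw [ContinuousLinearMap.comp_apply, h] at hv
  exact hv.symm.trans (DFunLike.congr_fun hid w)

end Manifold

theorem isLocallyConstant_of_mfderiv_eq_zero
    {F : Type*} [NormedAddCommGroup F] [NormedSpace ℝ F]
    {E : Type*} [NormedAddCommGroup E] [NormedSpace ℝ E]
    {H : Type*} [TopologicalSpace H] {I : ModelWithCorners ℝ E H}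
    {M : Type*} [TopologicalSpace M] [ChartedSpace H M] [IsManifold I 1 M]
    {f : F → M} (hf : MDifferentiable 𝓘(ℝ, F) I f) (hf' : ∀ x, mfderiv 𝓘(ℝ, F) I f x = 0) :
    IsLocallyConstant f := by
  refine (IsLocallyConstant.iff_eventually_eq f).2 fun x₀ => ?_
  have hU : IsOpen (f ⁻¹' (chartAt H (f x₀)).source) :=
    (chartAt H (f x₀)).open_source.preimage hf.continuous
  have hchart : ∀ x ∈ f ⁻¹' (chartAt H (f x₀)).source,
      HasFDerivAt (extChartAt I (f x₀) ∘ f) (0 : F →L[ℝ] E) x := by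
    intro x hx
    have := (hasMFDerivAt_extChartAt hx).comp x (hf' x ▸ (hf x).hasMFDerivAt)
    erw [ContinuousLinearMap.comp_zero] at this
    exact hasMFDerivAt_iff_hasFDerivAt.mp this
  have hfiber := hU.isOpen_inter_preimage_of_fderiv_eq_zero
    (fun x hx => (hchart x hx).differentiableAt.differentiableWithinAt)
    (fun x hx => (hchart x hx).fderiv) {(extChartAt I (f x₀) ∘ f) x₀}
  filter_upwards [hfiber.mem_nhds ⟨mem_chart_source H (f x₀), rfl⟩] with x ⟨hx, hφx⟩
  exact (extChartAt I (f x₀)).injOn (by simpa using hx) (by simp) hφx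

section LieGroup

variable {𝕜 : Type*} [NontriviallyNormedField 𝕜]
  {E : Type*} [NormedAddCommGroup E] [NormedSpace 𝕜 E]
  {H : Type*} [TopologicalSpace H] {I : ModelWithCorners 𝕜 E H}
  {G : Type*} [TopologicalSpace G] [ChartedSpace H G] [Group G] [ContMDiffMul I 1 G]

theorem mfderiv_mul_left_mul_left (a b x : G) (v : E) :
    mfderiv I I (a * ·) (b * x) (mfderiv I I (b * ·) x v) = mfderiv I I (a * b * ·) x v := by
  have hcomp : (a * b * ·) = (a * ·) ∘ (b * ·) := funext fun _ => mul_assoc _ _ _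
  rw [hcomp, mfderiv_comp x mdifferentiableAt_mul_left mdifferentiableAt_mul_left]
  rfl

theorem mfderiv_mul_left_injective (a x : G) : Injective (mfderiv I I (a * ·) x) :=
  injective_mfderiv_of_leftInverse (inv_mul_cancel_left a) mdifferentiableAt_mul_left
    mdifferentiableAt_mul_left

theorem mfderiv_mul_right_injective (a x : G) : Injective (mfderiv I I (· * a) x) :=
  injective_mfderiv_of_leftInverse (mul_inv_cancel_right · a) mdifferentiableAt_mul_right
    mdifferentiableAt_mul_right

theorem mfderiv_inv_mul_left_eq_iff (a b : G) (v w : E) :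
    mfderiv I I (a⁻¹ * ·) a v = mfderiv I I (b⁻¹ * ·) b w ↔
      v = mfderiv I I (a * b⁻¹ * ·) b w := by
  have htranslate := mfderiv_mul_left_mul_left (I := I) a⁻¹ (a * b⁻¹) b w
  rw [inv_mul_cancel_right, inv_mul_cancel_left] at htranslate
  rw [← htranslate]
  exact (mfderiv_mul_left_injective a⁻¹ a).eq_iff

variable {E' : Type*} [NormedAddCommGroup E'] [NormedSpace 𝕜 E']
  {H' : Type*} [TopologicalSpace H'] {I' : ModelWithCorners 𝕜 E' H'}
  {M : Type*} [TopologicalSpace M] [ChartedSpace H' M]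

theorem mfderiv_mul_apply {f g : M → G} {x : M} (hf : MDifferentiableAt I' I f x)
    (hg : MDifferentiableAt I' I g x) (v : E') :
    mfderiv I' I (fun y => f y * g y) x v =
      mfderiv I I (· * g x) (f x) (mfderiv I' I f x v) +
        mfderiv I I (f x * ·) (g x) (mfderiv I' I g x v) := by
  have hmul : MDifferentiableAt (I.prod I) I (fun p : G × G => p.1 * p.2) (f x, g x) :=
    (contMDiff_mul I 1).mdifferentiableAt one_ne_zero
  have hcomp : (fun y => f y * g y) = (fun p : G × G => p.1 * p.2) ∘ (fun y => (f y, g y)) := rfl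
  rw [hcomp, mfderiv_comp x hmul (hf.prodMk hg)]
  erw [ContinuousLinearMap.comp_apply, hf.mfderiv_prod hg]
  exact mfderiv_prod_eq_add_apply hmul

end LieGroup

theorem curves_left_congruent_iff_maurer_cartan_eq_general
    {E : Type*} [NormedAddCommGroup E] [NormedSpace ℝ E]
    {H : Type*} [TopologicalSpace H] (I : ModelWithCorners ℝ E H)
    {G : Type*} [TopologicalSpace G] [ChartedSpace H G] [Group G] [LieGroup I (⊤ : ℕ∞) G]
    (σ₁ σ₂ : ℝ → G)
    (hσ₁ : ContMDiff 𝓘(ℝ, ℝ) I (⊤ : ℕ∞) σ₁)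
    (hσ₂ : ContMDiff 𝓘(ℝ, ℝ) I (⊤ : ℕ∞) σ₂) :
    (∃ γ : G, ∀ t : ℝ, σ₁ t = γ * σ₂ t)
      ↔
    (∀ t : ℝ,
      (mfderiv I I (fun h => (σ₁ t)⁻¹ * h) (σ₁ t)
          (mfderiv 𝓘(ℝ, ℝ) I σ₁ t (1 : ℝ)) : E)
        = (mfderiv I I (fun h => (σ₂ t)⁻¹ * h) (σ₂ t)
            (mfderiv 𝓘(ℝ, ℝ) I σ₂ t (1 : ℝ)) : E)) := by
  have hdσ₂ := hσ₂.mdifferentiable (by simp)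
  refine Iff.trans ?_ (forall_congr' fun t => (mfderiv_inv_mul_left_eq_iff (σ₁ t) (σ₂ t) _ _).symm)
  constructor
  · rintro ⟨γ, hγ⟩ t
    obtain rfl : σ₁ = fun s => γ * σ₂ s := funext hγ
    rw [mul_inv_cancel_right]
    exact mfderiv_comp_apply t mdifferentiableAt_mul_left (hdσ₂ t) 1
  · intro h
    set v := fun s => σ₁ s * (σ₂ s)⁻¹
    have hσ₁v : σ₁ = fun s => v s * σ₂ s := funext fun s => (inv_mul_cancel_right _ _).symm
    have hv : MDifferentiable 𝓘(ℝ, ℝ) I v := (hσ₁.mul hσ₂.inv).mdifferentiable (by simp)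
    have hv_deriv : ∀ t, mfderiv 𝓘(ℝ, ℝ) I v t = 0 := by
      intro t
      have hprod := mfderiv_mul_apply (hv t) (hdσ₂ t) 1
      rw [← hσ₁v] at hprod
      have hright : mfderiv I I (· * σ₂ t) (v t) (mfderiv 𝓘(ℝ, ℝ) I v t 1) = 0 :=
        add_eq_right.mp (hprod.symm.trans (h t))
      exact ContinuousLinearMap.ext_ring
        ((mfderiv_mul_right_injective _ _).eq_iff' (map_zero _) |>.mp hright)
    have hconst := (isLocallyConstant_of_mfderiv_eq_zero hv hv_deriv).apply_eq_of_preconnectedSpace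
    exact ⟨v 0, fun t => by rw [hσ₁v, ← hconst t 0]⟩

/-- **Curves in a Lie group are left-congruent iff they have the same Maurer–Cartan
velocities** (Proposition `left_invariant_metric`): for smooth curves
`σ₁, σ₂ : ℝ → G` into a finite-dimensional real Lie group `G`, there is `γ ∈ G` with
`σ₁(t) = γ · σ₂(t)` for all `t` iff `ω(σ₁'(t)) = ω(σ₂'(t))` for all `t`, where the
Maurer–Cartan form `ω` applied to the velocity `σ'(t)` is the image of
`σ'(t) ∈ T_{σ(t)}G` under the differential at `σ(t)` of left translation by
`σ(t)⁻¹`. -/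
theorem curves_left_congruent_iff_maurer_cartan_eq
    {E : Type*} [NormedAddCommGroup E] [NormedSpace ℝ E] [FiniteDimensional ℝ E]
    {H : Type*} [TopologicalSpace H] (I : ModelWithCorners ℝ E H)
    {G : Type*} [TopologicalSpace G] [ChartedSpace H G] [Group G] [LieGroup I (⊤ : ℕ∞) G]
    (σ₁ σ₂ : ℝ → G)
    (hσ₁ : ContMDiff 𝓘(ℝ, ℝ) I (⊤ : ℕ∞) σ₁)
    (hσ₂ : ContMDiff 𝓘(ℝ, ℝ) I (⊤ : ℕ∞) σ₂) :
    (∃ γ : G, ∀ t : ℝ, σ₁ t = γ * σ₂ t)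
      ↔
    (∀ t : ℝ,
      (mfderiv I I (fun h => (σ₁ t)⁻¹ * h) (σ₁ t)
          (mfderiv 𝓘(ℝ, ℝ) I σ₁ t (1 : ℝ)) : E)
        = (mfderiv I I (fun h => (σ₂ t)⁻¹ * h) (σ₂ t)
            (mfderiv 𝓘(ℝ, ℝ) I σ₂ t (1 : ℝ)) : E)) :=
  curves_left_congruent_iff_maurer_cartan_eq_general I σ₁ σ₂ hσ₁ hσ₂
end
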